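/- arXiv:1908.08565 — 9 statements merged into one kernel-verified Lean document; each statement's English description precedes it below -/
import Mathlib

section
/- Fix n ∈ ℕ and m ≥ 2. For every vector X ∈ ℝⁿ and every index j ∈ {1,…,n}, the quantity C_j^m(X) satisfies the recursion C_j^m(X) = (Σ_{i=1}^n X_i · C_i^{m−1}(X)) − (m−1) · X_j · C_j^{m−1}(X). Equivalently, in matrix form, the row vector C^m = (C_1^m,…,C_n^m) satisfies C^m = C^{m−1} · 𝐗 · (J − (m−1)I), where 𝐗 is the diagonal matrix with X on the main diagonal, J is the n×n all-ones matrix, and I the n×n identity. -/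
open MeasureTheory ProbabilityTheory Real Set

noncomputable section

/-- The real-valued vertex configuration associated to a boolean configuration. -/
def boolToR (n : ℕ) (X : Fin n → Bool) : Fin n → ℝ := fun i => if X i then 1 else 0

/-- The 1-norm on ℝⁿ. -/
def norm1 (n : ℕ) (x : Fin n → ℝ) : ℝ := ∑ i, |x i|

/-- `C_j^m(X)`: the sum over (m-1)-tuples of pairwise distinct indices, all distinct
from `j`, of the products of the corresponding entries of `X`; `C_j^1 = 1`. -/
def Cvec (n m : ℕ) (X : Fin n → ℝ) (j : Fin n) : ℝ :=
  ∑ g ∈ Finset.univ.filter (fun g : Fin (m - 1) ↪ Fin n => ∀ k, g k ≠ j),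
    ∏ k, X (g k)

/-- The subgraph counting function with parameters `p`, `m₁,…,m_l`, `α₁,…,α_l`. -/
def scf (n l : ℕ) (p : ℝ) (m : Fin l → ℕ) (α : Fin l → ℝ) (X : Fin n → ℝ) : ℝ :=
  (∑ q, (α q / (n : ℝ) ^ (m q - 1)) * ∑ g : Fin (m q) ↪ Fin n, ∏ k, X (g k)) +
    Real.log (p / (1 - p)) * ∑ i, |X i|

/-- The discrete derivative `∂ⱼf(X) = (f(X^{j←1}) - f(X^{j←0}))/2`. -/
def dder (n : ℕ) (f : (Fin n → ℝ) → ℝ) (X : Fin n → ℝ) (j : Fin n) : ℝ :=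
  (f (Function.update X j 1) - f (Function.update X j 0)) / 2

/-- The polynomial extension of the discrete gradient of the subgraph counting function:
`∂ⱼf(X) = Σ_q (m_q α_q/(2 n^{m_q-1})) C_j^{m_q}(X) + ½ log(p/(1-p))`. -/
def gradf (n l : ℕ) (p : ℝ) (m : Fin l → ℕ) (α : Fin l → ℝ) (X : Fin n → ℝ)
    (j : Fin n) : ℝ :=
  (∑ q, ((m q : ℝ) * α q / (2 * (n : ℝ) ^ (m q - 1))) * Cvec n (m q) X j) +
    Real.log (p / (1 - p)) / 2

/-- `C_α = max{2, ½|log(p/(1-p))| + ½ Σ_q |α_q| m_q (m_q - 1)}`. -/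
def Calpha (l : ℕ) (p : ℝ) (m : Fin l → ℕ) (α : Fin l → ℝ) : ℝ :=
  max 2 (|Real.log (p / (1 - p))| / 2 + (∑ q, |α q| * (m q : ℝ) * ((m q : ℝ) - 1)) / 2)

/-- `Φ(X) = (1ₙ + tanh(∇f(X)))/2`, entrywise. -/
def Phi (n l : ℕ) (p : ℝ) (m : Fin l → ℕ) (α : Fin l → ℝ) (X : Fin n → ℝ) :
    Fin n → ℝ :=
  fun j => (1 + Real.tanh (gradf n l p m α X j)) / 2

/-- The set `X_f` of near fixed points of `X ↦ (1ₙ + tanh(∇f(X)))/2` in `[0,1]ⁿ`. -/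
def Xf (n l : ℕ) (p : ℝ) (m : Fin l → ℕ) (α : Fin l → ℝ) : Set (Fin n → ℝ) :=
  {X | (∀ i, X i ∈ Set.Icc (0:ℝ) 1) ∧
    norm1 n (fun j => X j - Phi n l p m α X j) ≤
      5000 * (Calpha l p m α) ^ 2 * (n : ℝ) ^ ((7:ℝ)/8)}

/-- The one-dimensional fixed point function `φ_α`. -/
def phiA (n l : ℕ) (p : ℝ) (m : Fin l → ℕ) (α : Fin l → ℝ) (x : ℝ) : ℝ :=
  (1 + Real.tanh (Real.log (p / (1 - p)) / 2 +
    (∑ q, (m q : ℝ) * α q * (∏ i ∈ Finset.Icc 1 (m q - 1), (1 - (i : ℝ) / n)) *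
      x ^ (m q - 1)) / 2)) / 2

/-!
`C_j^{k+2}(X)` is the sum of `∏ X (g t)` over the injective tuples `g : Fin (k+1) ↪ ι` that avoid
`j`. Summing over all injective tuples instead and recording the first entry gives
`Σ_i X_i C_i^{k+1}(X)`. A tuple that hits `j` does so in exactly one of its `k+1` slots, and the
tuples with `j` in a fixed slot contribute `X_j C_j^{k+1}(X)`; subtracting these yields the
recursion.
-/

open Finset

section CommSemiring

variable {ι R : Type*} [Fintype ι] [DecidableEq ι] [CommSemiring R]

-- `Cvec n m X j` is `avoidingSum (m - 1) X j` by definition: the index counts tuple length.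
def avoidingSum (k : ℕ) (X : ι → R) (j : ι) : R :=
  ∑ g ∈ univ.filter (fun g : Fin k ↪ ι => ∀ t, g t ≠ j), ∏ t, X (g t)

theorem sum_prod_embedding_apply_zero_eq (k : ℕ) (X : ι → R) (j : ι) :
    ∑ g ∈ univ.filter (fun g : Fin (k + 1) ↪ ι => g 0 = j), ∏ t, X (g t) =
      X j * avoidingSum k X j := by
  rw [sum_filter, avoidingSum, mul_sum, sum_filter,
    Fintype.sum_equiv (Equiv.embeddingFinSucc k ι) _
      (fun p => if (p.2 : ι) = j then X p.2 * ∏ t, X (p.1 t) else 0)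
      (fun g => by rw [Fin.prod_univ_succ]; rfl),
    Fintype.sum_sigma]
  refine Fintype.sum_congr _ _ fun e => ?_
  dsimp only
  rw [← Finset.sum_subtype (univ.filter (· ∉ Set.range e)) (by simp)
    (fun i => if i = j then X i * ∏ t, X (e t) else 0)]
  simp [eq_comm]

theorem sum_prod_embedding_apply_eq (k : ℕ) (X : ι → R) (p : Fin (k + 1)) (j : ι) :
    ∑ g ∈ univ.filter (fun g : Fin (k + 1) ↪ ι => g p = j), ∏ t, X (g t) =
      X j * avoidingSum k X j := by
  rw [← sum_prod_embedding_apply_zero_eq]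
  refine sum_equiv (Equiv.embeddingCongr (Equiv.swap 0 p) (Equiv.refl ι)) (by simp) ?_
  exact fun g _ => (Equiv.prod_comp (Equiv.swap 0 p) fun t => X (g t)).symm

theorem sum_prod_embedding_eq (k : ℕ) (X : ι → R) :
    ∑ g : Fin (k + 1) ↪ ι, ∏ t, X (g t) = ∑ i, X i * avoidingSum k X i := by
  rw [← sum_fiberwise univ (fun g : Fin (k + 1) ↪ ι => g 0)]
  simp only [sum_prod_embedding_apply_zero_eq]

theorem sum_prod_embedding_hitting_eq (k : ℕ) (X : ι → R) (j : ι) :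
    ∑ g ∈ univ.filter (fun g : Fin (k + 1) ↪ ι => ∃ t, g t = j), ∏ t, X (g t) =
      (k + 1) * (X j * avoidingSum k X j) := by
  have hit_eq_sum_slots (g : Fin (k + 1) ↪ ι) :
      (if ∃ t, g t = j then ∏ t, X (g t) else 0) =
        ∑ p, if g p = j then ∏ t, X (g t) else 0 := by
    split_ifs with h
    · obtain ⟨p, rfl⟩ := h
      simp [g.injective.eq_iff]
    · push Not at h
      simp [h]
  rw [sum_filter, Fintype.sum_congr _ _ hit_eq_sum_slots, sum_comm]
  simp [← sum_filter, sum_prod_embedding_apply_eq]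

end CommSemiring

theorem avoidingSum_succ {ι R : Type*} [Fintype ι] [DecidableEq ι] [CommRing R] (k : ℕ)
    (X : ι → R) (j : ι) :
    avoidingSum (k + 1) X j =
      (∑ i, X i * avoidingSum k X i) - (k + 1) * X j * avoidingSum k X j := by
  have hsplit := sum_filter_add_sum_filter_not univ
    (fun g : Fin (k + 1) ↪ ι => ∀ t, g t ≠ j) fun g => ∏ t, X (g t)
  simp only [not_forall, not_not] at hsplit
  rw [sum_prod_embedding_hitting_eq, sum_prod_embedding_eq] at hsplit
  rw [avoidingSum, ← hsplit]
  ring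

/-- the recursion
`C_j^m(X) = (Σ_i X_i C_i^{m-1}(X)) - (m-1) X_j C_j^{m-1}(X)`, which is the entrywise
form of the matrix identity `C^m = C^{m-1} · X · (J - (m-1)I)`. -/
theorem stmt0 (n m : ℕ) (hm : 2 ≤ m) (X : Fin n → ℝ) (j : Fin n) :
    Cvec n m X j =
      (∑ i, X i * Cvec n (m - 1) X i) - ((m : ℝ) - 1) * X j * Cvec n (m - 1) X j := by
  obtain ⟨k, rfl⟩ : ∃ k, m = k + 2 := ⟨m - 2, by omega⟩
  have hcast : ((k + 2 : ℕ) : ℝ) - 1 = k + 1 := by push_cast; ring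
  rw [hcast]
  exact avoidingSum_succ k X j

end
end

section
/- Let f be a subgraph counting function with parameters p ∈ (0,1), distinct integers m₁,…,m_l ≥ 2 and weights α₁,…,α_l ∈ ℝ. If X, Y ∈ {0,1}^n differ in exactly one coordinate i, then for every j ∈ {1,…,n}, |∂ⱼ f(X) − ∂ⱼ f(Y)| ≤ (1/(2n)) · Σ_{q=1}^l |α_q| m_q (m_q − 1). -/
open MeasureTheory ProbabilityTheory Real Set

noncomputable section

/-!
Flipping `X_j` changes a monomial `∏ₖ X_{g k}` by `0` if `j ∉ range g`, and otherwise by a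
number in `[0, 1]` that depends only on the entries of `X` off `j`. Hence for configurations
differing only at `i`, the only monomials whose discrete derivative at `j` can differ are
those indexed by injections `g : Fin m ↪ Fin n` taking the values `i` and `j` at two distinct
positions; there are at most `m (m - 1) n^(m - 2)` of them, and each contributes at most `1`.
Dividing by `n^(m - 1)` gives the bound `|α| m (m - 1) / n`; the linear term of `f` drops out
of the difference.
-/

section MonomialDiff

variable {ι κ : Type*} [DecidableEq ι] [Fintype κ]

/-- Twice the discrete derivative at `j` of the monomial `∏ₖ Z (g k)`. -/
def monomialDiff (Z : ι → ℝ) (j : ι) (g : κ → ι) : ℝ :=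
  (∏ k, Function.update Z j 1 (g k)) - ∏ k, Function.update Z j 0 (g k)

lemma monomialDiff_mem_Icc {Z : ι → ℝ} (hZ : ∀ k, Z k ∈ Set.Icc 0 1) (j : ι) (g : κ → ι) :
    monomialDiff Z j g ∈ Set.Icc 0 1 := by
  have hupd : ∀ b ∈ Set.Icc (0 : ℝ) 1, ∀ x, Function.update Z j b x ∈ Set.Icc 0 1 := by
    intro b hb x
    rcases eq_or_ne x j with rfl | hx
    · simpa using hb
    · simpa [hx] using hZ x
  have hmono : ∀ x, Function.update Z j 0 x ≤ Function.update Z j 1 x := by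
    intro x
    rcases eq_or_ne x j with rfl | hx <;> simp [*]
  have h0 := fun k => hupd 0 (by simp) (g k)
  have h1 := fun k => hupd 1 (by simp) (g k)
  constructor
  · exact sub_nonneg.2 (Finset.prod_le_prod (fun k _ => (h0 k).1) fun k _ => hmono (g k))
  · have hP₁ : ∏ k, Function.update Z j 1 (g k) ≤ 1 :=
      Finset.prod_le_one (fun k _ => (h1 k).1) fun k _ => (h1 k).2
    have hP₀ : 0 ≤ ∏ k, Function.update Z j 0 (g k) := Finset.prod_nonneg fun k _ => (h0 k).1
    unfold monomialDiff
    linarith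

lemma monomialDiff_eq_zero {Z : ι → ℝ} {j : ι} {g : κ → ι} (hg : ∀ k, g k ≠ j) :
    monomialDiff Z j g = 0 := by
  simp [monomialDiff, Function.update_of_ne (hg _)]

lemma monomialDiff_congr {Z Z' : ι → ℝ} {j : ι} {g : κ → ι}
    (h : ∀ k, g k ≠ j → Z (g k) = Z' (g k)) : monomialDiff Z j g = monomialDiff Z' j g := by
  have : ∀ b k, Function.update Z j b (g k) = Function.update Z' j b (g k) := by
    intro b k
    rcases eq_or_ne (g k) j with hk | hk
    · simp [hk]
    · simp [Function.update_of_ne hk, h k hk]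
  simp only [monomialDiff, this]

end MonomialDiff

section Counting

open Finset

variable {ι : Type*} [Fintype ι] [DecidableEq ι] {M : ℕ}

lemma card_embedding_apply_eq_apply_eq_le {k₁ k₂ : Fin M} (hk : k₁ ≠ k₂) (i j : ι) :
    #{g : Fin M ↪ ι | g k₁ = i ∧ g k₂ = j} ≤ Fintype.card ι ^ (M - 2) := by
  have hcard : Fintype.card {k : Fin M // k ≠ k₁ ∧ k ≠ k₂} = M - 2 := by
    have : ({k | k ≠ k₁ ∧ k ≠ k₂} : Finset (Fin M)) = {k₁, k₂}ᶜ := by ext; simp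
    rw [Fintype.card_subtype, this, card_compl, card_pair hk, Fintype.card_fin]
  calc #{g : Fin M ↪ ι | g k₁ = i ∧ g k₂ = j}
      ≤ Fintype.card ({k : Fin M // k ≠ k₁ ∧ k ≠ k₂} → ι) := by
        refine card_le_card_of_injOn (fun g k => g k.1) (fun _ _ => Finset.mem_univ _) ?_
        intro g hg g' hg' h
        simp only [coe_filter, Finset.mem_univ, true_and, Set.mem_ofPred_eq] at hg hg'
        refine DFunLike.ext _ _ fun k => ?_
        by_cases h₁ : k = k₁
        · rw [h₁, hg.1, hg'.1]
        by_cases h₂ : k = k₂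
        · rw [h₂, hg.2, hg'.2]
        exact congrFun h ⟨k, h₁, h₂⟩
    _ = Fintype.card ι ^ (M - 2) := by rw [Fintype.card_fun, hcard]

lemma card_embedding_exists_apply_eq_apply_eq_le (i j : ι) :
    #{g : Fin M ↪ ι | ∃ k ∈ (univ : Finset (Fin M)).offDiag, g k.1 = i ∧ g k.2 = j}
      ≤ M * (M - 1) * Fintype.card ι ^ (M - 2) := by
  calc _ ≤ #((univ : Finset (Fin M)).offDiag.biUnion
          fun k => {g : Fin M ↪ ι | g k.1 = i ∧ g k.2 = j}) :=
        card_le_card fun g hg => by simpa using hg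
    _ ≤ ∑ k ∈ (univ : Finset (Fin M)).offDiag, #{g : Fin M ↪ ι | g k.1 = i ∧ g k.2 = j} :=
        card_biUnion_le
    _ ≤ ∑ _k ∈ (univ : Finset (Fin M)).offDiag, Fintype.card ι ^ (M - 2) :=
        sum_le_sum fun k hk => card_embedding_apply_eq_apply_eq_le (mem_offDiag.1 hk).2.2 i j
    _ = M * (M - 1) * Fintype.card ι ^ (M - 2) := by
        rw [sum_const, smul_eq_mul, offDiag_card, card_univ, Fintype.card_fin, Nat.mul_sub_one]

lemma abs_sum_monomialDiff_sub_le {Z Z' : ι → ℝ} (hZ : ∀ k, Z k ∈ Set.Icc 0 1)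
    (hZ' : ∀ k, Z' k ∈ Set.Icc 0 1) {i : ι} (hZZ' : ∀ k, k ≠ i → Z k = Z' k) (j : ι) :
    |∑ g : Fin M ↪ ι, monomialDiff Z j g - ∑ g : Fin M ↪ ι, monomialDiff Z' j g|
      ≤ (M * (M - 1) * Fintype.card ι ^ (M - 2) : ℕ) := by
  set P := fun g : Fin M ↪ ι => ∃ k ∈ (univ : Finset (Fin M)).offDiag, g k.1 = i ∧ g k.2 = j
  have hP : ∀ g, ¬ P g → monomialDiff Z j g = monomialDiff Z' j g := by
    intro g hg
    by_cases hj : ∃ k₂, g k₂ = j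
    · obtain ⟨k₂, rfl⟩ := hj
      refine monomialDiff_congr fun k hk => hZZ' _ fun hki => hg ⟨(k, k₂), ?_, hki, rfl⟩
      simpa using fun h : k = k₂ => hk (h ▸ rfl)
    · push Not at hj
      rw [monomialDiff_eq_zero hj, monomialDiff_eq_zero hj]
  rw [← sum_sub_distrib,
    ← sum_filter_of_ne fun g _ h => not_not.1 fun hg => h (sub_eq_zero.2 (hP g hg))]
  calc _ ≤ ∑ g with P g, |monomialDiff Z j g - monomialDiff Z' j g| := abs_sum_le_sum_abs _ _
    _ ≤ ∑ g with P g, (1 : ℝ) := sum_le_sum fun g _ =>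
        abs_sub_le_of_nonneg_of_le (monomialDiff_mem_Icc hZ j g).1 (monomialDiff_mem_Icc hZ j g).2
          (monomialDiff_mem_Icc hZ' j g).1 (monomialDiff_mem_Icc hZ' j g).2
    _ = #{g | P g} := by simp
    _ ≤ _ := by exact_mod_cast card_embedding_exists_apply_eq_apply_eq_le i j

end Counting

lemma dder_scf (n l : ℕ) (p : ℝ) (m : Fin l → ℕ) (α : Fin l → ℝ) (Z : Fin n → ℝ) (j : Fin n) :
    dder n (scf n l p m α) Z j =
      ((∑ q, α q / (n : ℝ) ^ (m q - 1) * ∑ g : Fin (m q) ↪ Fin n, monomialDiff Z j g) +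
        Real.log (p / (1 - p))) / 2 := by
  have hnorm : ∀ b : ℝ, ∑ x, |Function.update Z j b x| = |b| + ∑ x ∈ Finset.univ \ {j}, |Z x| :=
    fun b => by
      rw [← Finset.sum_update_of_mem (Finset.mem_univ j)]
      exact Finset.sum_congr rfl fun x _ => Function.apply_update (fun _ (y : ℝ) => |y|) Z j b x
  simp only [dder, scf, monomialDiff, hnorm, abs_one, abs_zero, Finset.mul_sum,
    Finset.sum_sub_distrib, mul_sub]
  ring

lemma cast_mul_sub_one_mul_pow_div_pow (M : ℕ) {n : ℕ} (hn : n ≠ 0) :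
    ((M * (M - 1) * n ^ (M - 2) : ℕ) : ℝ) / (n : ℝ) ^ (M - 1) = M * ((M : ℝ) - 1) / n := by
  rcases M with _ | _ | M
  · simp
  · simp
  · push_cast
    field_simp
    ring

lemma abs_sum_monomialDiff_sub_div_pow_le {n M : ℕ} (hn : n ≠ 0) {Z Z' : Fin n → ℝ}
    (hZ : ∀ k, Z k ∈ Set.Icc 0 1) (hZ' : ∀ k, Z' k ∈ Set.Icc 0 1) {i : Fin n}
    (hZZ' : ∀ k, k ≠ i → Z k = Z' k) (j : Fin n) :
    |∑ g : Fin M ↪ Fin n, monomialDiff Z j g - ∑ g : Fin M ↪ Fin n, monomialDiff Z' j g| /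
      (n : ℝ) ^ (M - 1) ≤ M * ((M : ℝ) - 1) / n := by
  rw [← cast_mul_sub_one_mul_pow_div_pow M hn]
  gcongr
  simpa using abs_sum_monomialDiff_sub_le hZ hZ' hZZ' j

lemma abs_dder_scf_sub_le (n l : ℕ) (p : ℝ) (m : Fin l → ℕ) (α : Fin l → ℝ)
    {Z Z' : Fin n → ℝ} (hZ : ∀ k, Z k ∈ Set.Icc 0 1) (hZ' : ∀ k, Z' k ∈ Set.Icc 0 1)
    {i : Fin n} (hZZ' : ∀ k, k ≠ i → Z k = Z' k) (j : Fin n) :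
    |dder n (scf n l p m α) Z j - dder n (scf n l p m α) Z' j| ≤
      (1 / (2 * (n : ℝ))) * ∑ q, |α q| * (m q : ℝ) * ((m q : ℝ) - 1) := by
  have hn : n ≠ 0 := i.pos.ne'
  set Δ := fun q => ∑ g : Fin (m q) ↪ Fin n, monomialDiff Z j g -
    ∑ g : Fin (m q) ↪ Fin n, monomialDiff Z' j g
  calc _ = |∑ q, α q / (n : ℝ) ^ (m q - 1) * Δ q| / 2 := by
        rw [dder_scf, dder_scf, ← abs_two, ← abs_div]
        congr 1
        simp only [Δ, mul_sub, Finset.sum_sub_distrib]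
        ring
    _ ≤ (∑ q, |α q| * (|Δ q| / (n : ℝ) ^ (m q - 1))) / 2 := by
        gcongr
        refine (Finset.abs_sum_le_sum_abs _ _).trans_eq (Finset.sum_congr rfl fun q _ => ?_)
        have hN : (0 : ℝ) < (n : ℝ) ^ (m q - 1) := by positivity
        rw [abs_mul, abs_div, abs_of_pos hN]
        ring
    _ ≤ (∑ q, |α q| * (m q * ((m q : ℝ) - 1) / n)) / 2 :=
        div_le_div_of_nonneg_right (Finset.sum_le_sum fun q _ => mul_le_mul_of_nonneg_left
          (abs_sum_monomialDiff_sub_div_pow_le hn hZ hZ' hZZ' j) (abs_nonneg _)) zero_le_two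
    _ = _ := by
        rw [Finset.mul_sum, Finset.sum_div]
        exact Finset.sum_congr rfl fun q _ => by ring

theorem stmt3_general (n l : ℕ) (p : ℝ)
    (m : Fin l → ℕ)
    (α : Fin l → ℝ) (X Y : Fin n → Bool) (i : Fin n)
    (hXY : ∀ k, k ≠ i → X k = Y k) (j : Fin n) :
    |dder n (scf n l p m α) (boolToR n X) j - dder n (scf n l p m α) (boolToR n Y) j| ≤
      (1 / (2 * (n : ℝ))) * ∑ q, |α q| * (m q : ℝ) * ((m q : ℝ) - 1) := by
  have hZ : ∀ (W : Fin n → Bool) k, boolToR n W k ∈ Set.Icc 0 1 := fun W k => by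
    unfold boolToR; split_ifs <;> simp
  exact abs_dder_scf_sub_le n l p m α (hZ X) (hZ Y) (i := i)
    (fun k hk => by simp [boolToR, hXY k hk]) j

/-- if `X, Y ∈ {0,1}ⁿ` differ in exactly one coordinate `i`, then for every
`j`, `|∂ⱼf(X) - ∂ⱼf(Y)| ≤ (1/(2n)) Σ_q |α_q| m_q (m_q - 1)`. -/
theorem stmt3 (n l : ℕ) (p : ℝ) (hp : p ∈ Set.Ioo (0:ℝ) 1)
    (m : Fin l → ℕ) (hm : ∀ q, 2 ≤ m q) (hminj : Function.Injective m)
    (α : Fin l → ℝ) (X Y : Fin n → Bool) (i : Fin n)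
    (hi : X i ≠ Y i) (hXY : ∀ k, k ≠ i → X k = Y k) (j : Fin n) :
    |dder n (scf n l p m α) (boolToR n X) j - dder n (scf n l p m α) (boolToR n Y) j| ≤
      (1 / (2 * (n : ℝ))) * ∑ q, |α q| * (m q : ℝ) * ((m q : ℝ) - 1) :=
  stmt3_general n l p m α X Y i hXY j

end
end

section
/- Let f be a subgraph counting function with parameters p ∈ (0,1), distinct integers m₁,…,m_l ≥ 2 and weights α₁,…,α_l ∈ ℝ, with gradient ∇f extended polynomially to [0,1]^n. Then for all X, Y ∈ [0,1]^n, ‖∇f(X) − ∇f(Y)‖₁ ≤ C ‖X − Y‖₁, where C = ½ Σ_{q=1}^l |α_q| m_q (m_q − 1). -/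
open MeasureTheory ProbabilityTheory Real Set

noncomputable section

/-!
Each coordinate of `∇f` is a linear combination of the `C_j^m(X)`, sums of products of `m - 1`
coordinates of `X`. For factors in `[-1, 1]` a product moves by at most the `ℓ¹` distance of
its factors (telescoping). Enlarging the sum over injective tuples avoiding `j` to all maps
`Fin (m - 1) → Fin n`, each coordinate `i` is hit `(m - 1) n^(m - 2)` times, so
`∑_j |C_j^m(X) - C_j^m(Y)| ≤ (m - 1) n^(m - 1) ‖X - Y‖₁`; the normalisation
`m α / (2 n^(m - 1))` of `∇f` turns this into the constant `½ ∑_q |α_q| m_q (m_q - 1)`.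
-/

theorem abs_prod_sub_prod_le_sum_abs_sub {ι : Type*} [DecidableEq ι] (s : Finset ι) {a b : ι → ℝ}
    (ha : ∀ i ∈ s, |a i| ≤ 1) (hb : ∀ i ∈ s, |b i| ≤ 1) :
    |∏ i ∈ s, a i - ∏ i ∈ s, b i| ≤ ∑ i ∈ s, |a i - b i| := by
  induction s using Finset.induction_on with
  | empty => simp
  | insert i s hi ih =>
    simp only [Finset.mem_insert, forall_eq_or_imp] at ha hb
    rw [Finset.prod_insert hi, Finset.prod_insert hi, Finset.sum_insert hi]
    have hbs : |∏ j ∈ s, b j| ≤ 1 := by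
      rw [Finset.abs_prod]; exact Finset.prod_le_one (fun _ _ => abs_nonneg _) hb.2
    calc |a i * ∏ j ∈ s, a j - b i * ∏ j ∈ s, b j|
        = |a i * (∏ j ∈ s, a j - ∏ j ∈ s, b j) + (a i - b i) * ∏ j ∈ s, b j| := by ring_nf
      _ ≤ |a i| * |∏ j ∈ s, a j - ∏ j ∈ s, b j| + |a i - b i| * |∏ j ∈ s, b j| := by
        rw [← abs_mul, ← abs_mul]; exact abs_add_le _ _
      _ ≤ 1 * ∑ j ∈ s, |a j - b j| + |a i - b i| * 1 := by
        gcongr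
        exacts [ha.1, ih ha.2 hb.2]
      _ = |a i - b i| + ∑ j ∈ s, |a j - b j| := by ring

theorem sum_comp_eval_eq {κ ι : Type*} [Fintype κ] [DecidableEq κ] [Fintype ι] [DecidableEq ι]
    (k : κ) (w : ι → ℝ) :
    ∑ g : κ → ι, w (g k) = (Fintype.card ι : ℝ) ^ (Fintype.card κ - 1) * ∑ i, w i := by
  rw [← Finset.sum_fiberwise Finset.univ (fun g : κ → ι => g k), Finset.mul_sum]
  refine Finset.sum_congr rfl fun i _ => ?_
  rw [Finset.sum_congr rfl fun g hg => congrArg w (Finset.mem_filter.mp hg).2, Finset.sum_const,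
    ← Fintype.piFinset_univ, Fintype.card_filter_piFinset_const_eq_of_mem _ _ (Finset.mem_univ i)]
  simp

theorem abs_cvec_sub_le (n M : ℕ) {X Y : Fin n → ℝ} (hX : ∀ i, |X i| ≤ 1) (hY : ∀ i, |Y i| ≤ 1)
    (j : Fin n) :
    |Cvec n M X j - Cvec n M Y j| ≤ ∑ g : Fin (M - 1) → Fin n, ∑ k, |X (g k) - Y (g k)| := by
  rw [Cvec, Cvec, ← Finset.sum_sub_distrib]
  set avoiding := Finset.univ.filter fun g : Fin (M - 1) ↪ Fin n => ∀ k, g k ≠ j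
  calc _ ≤ ∑ g ∈ avoiding, |∏ k, X (g k) - ∏ k, Y (g k)| := Finset.abs_sum_le_sum_abs _ _
    _ ≤ ∑ g ∈ avoiding, ∑ k, |X (g k) - Y (g k)| :=
      Finset.sum_le_sum fun g _ =>
        abs_prod_sub_prod_le_sum_abs_sub _ (fun k _ => hX (g k)) (fun k _ => hY (g k))
    _ = ∑ g ∈ avoiding.image (fun g : Fin (M - 1) ↪ Fin n => ⇑g), ∑ k, |X (g k) - Y (g k)| := by
      rw [Finset.sum_image fun _ _ _ _ h => DFunLike.coe_injective h]
    _ ≤ _ := Finset.sum_le_univ_sum_of_nonneg fun _ => Finset.sum_nonneg fun _ _ => abs_nonneg _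

theorem sum_abs_cvec_sub_le (n M : ℕ) {X Y : Fin n → ℝ} (hX : ∀ i, |X i| ≤ 1)
    (hY : ∀ i, |Y i| ≤ 1) :
    ∑ j, |Cvec n M X j - Cvec n M Y j| ≤
      ((M - 1 : ℕ) : ℝ) * (n : ℝ) ^ (M - 1) * ∑ i, |X i - Y i| := by
  have hcount : ∑ g : Fin (M - 1) → Fin n, ∑ k, |X (g k) - Y (g k)| =
      ((M - 1 : ℕ) : ℝ) * (n : ℝ) ^ (M - 1 - 1) * ∑ i, |X i - Y i| := by
    rw [Finset.sum_comm]
    simp only [sum_comp_eval_eq _ fun i => |X i - Y i|, Finset.sum_const, Finset.card_univ,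
      Fintype.card_fin, nsmul_eq_mul, mul_assoc]
  calc ∑ j, |Cvec n M X j - Cvec n M Y j|
      ≤ ∑ _j : Fin n, ∑ g : Fin (M - 1) → Fin n, ∑ k, |X (g k) - Y (g k)| :=
        Finset.sum_le_sum fun j _ => abs_cvec_sub_le n M hX hY j
    _ = ((M - 1 : ℕ) : ℝ) * ((n : ℝ) * (n : ℝ) ^ (M - 1 - 1)) * ∑ i, |X i - Y i| := by
        rw [Finset.sum_const, Finset.card_univ, Fintype.card_fin, nsmul_eq_mul, hcount]; ring
    _ = ((M - 1 : ℕ) : ℝ) * (n : ℝ) ^ (M - 1) * ∑ i, |X i - Y i| := by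
        rcases Nat.eq_zero_or_pos (M - 1) with hd | hd
        · simp [hd]
        · rw [← pow_succ', Nat.sub_add_cancel hd]

theorem gradf_sub_gradf (n l : ℕ) (p : ℝ) (m : Fin l → ℕ) (α : Fin l → ℝ) (X Y : Fin n → ℝ)
    (j : Fin n) :
    gradf n l p m α X j - gradf n l p m α Y j =
      ∑ q, (m q : ℝ) * α q / (2 * (n : ℝ) ^ (m q - 1)) * (Cvec n (m q) X j - Cvec n (m q) Y j) := by
  simp only [gradf, add_sub_add_right_eq_sub, ← Finset.sum_sub_distrib, ← mul_sub]

theorem stmt4_general (n l : ℕ) (p : ℝ) (m : Fin l → ℕ) (α : Fin l → ℝ) (X Y : Fin n → ℝ)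
    (hX : ∀ i, X i ∈ Set.Icc (0:ℝ) 1) (hY : ∀ i, Y i ∈ Set.Icc (0:ℝ) 1) :
    norm1 n (fun j => gradf n l p m α X j - gradf n l p m α Y j) ≤
      ((∑ q, |α q| * (m q : ℝ) * ((m q : ℝ) - 1)) / 2) * norm1 n (fun i => X i - Y i) := by
  rcases eq_or_ne n 0 with rfl | hn
  · simp [norm1]
  have hX' (i : Fin n) : |X i| ≤ 1 := abs_le.mpr ⟨by linarith [(hX i).1], (hX i).2⟩
  have hY' (i : Fin n) : |Y i| ≤ 1 := abs_le.mpr ⟨by linarith [(hY i).1], (hY i).2⟩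
  set S := ∑ i, |X i - Y i|
  set c : Fin l → ℝ := fun q => (m q : ℝ) * α q / (2 * (n : ℝ) ^ (m q - 1))
  have hc (q : Fin l) : |c q| * (((m q - 1 : ℕ) : ℝ) * (n : ℝ) ^ (m q - 1) * S) =
      |α q| * (m q : ℝ) * ((m q : ℝ) - 1) / 2 * S := by
    have hm : (m q : ℝ) * ((m q - 1 : ℕ) : ℝ) = (m q : ℝ) * ((m q : ℝ) - 1) := by
      rcases Nat.eq_zero_or_pos (m q) with h | h
      · simp [h]
      · rw [Nat.cast_sub h, Nat.cast_one]
    have hn' : (n : ℝ) ^ (m q - 1) ≠ 0 := pow_ne_zero _ (Nat.cast_ne_zero.mpr hn)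
    simp only [c, abs_div, abs_mul, Nat.abs_cast, abs_two, abs_pow]
    field_simp
    linear_combination |α q| * S * hm
  calc norm1 n (fun j => gradf n l p m α X j - gradf n l p m α Y j)
      ≤ ∑ j, ∑ q, |c q| * |Cvec n (m q) X j - Cvec n (m q) Y j| := by
        refine Finset.sum_le_sum fun j _ => ?_
        simp only [gradf_sub_gradf, ← abs_mul]
        exact Finset.abs_sum_le_sum_abs _ _
    _ = ∑ q, |c q| * ∑ j, |Cvec n (m q) X j - Cvec n (m q) Y j| := by
        simp only [Finset.mul_sum]; exact Finset.sum_comm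
    _ ≤ ∑ q, |c q| * (((m q - 1 : ℕ) : ℝ) * (n : ℝ) ^ (m q - 1) * S) := by
        gcongr with q; exact sum_abs_cvec_sub_le n (m q) hX' hY'
    _ = _ := by simp only [hc, ← Finset.sum_mul, Finset.sum_div, norm1, S]

/-- for all `X, Y ∈ [0,1]ⁿ`,
`‖∇f(X) - ∇f(Y)‖₁ ≤ C ‖X - Y‖₁` with `C = ½ Σ_q |α_q| m_q (m_q - 1)`. -/
theorem stmt4 (n l : ℕ) (p : ℝ) (hp : p ∈ Set.Ioo (0:ℝ) 1)
    (m : Fin l → ℕ) (hm : ∀ q, 2 ≤ m q) (hminj : Function.Injective m)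
    (α : Fin l → ℝ) (X Y : Fin n → ℝ)
    (hX : ∀ i, X i ∈ Set.Icc (0:ℝ) 1) (hY : ∀ i, Y i ∈ Set.Icc (0:ℝ) 1) :
    norm1 n (fun j => gradf n l p m α X j - gradf n l p m α Y j) ≤
      ((∑ q, |α q| * (m q : ℝ) * ((m q : ℝ) - 1)) / 2) * norm1 n (fun i => X i - Y i) :=
  stmt4_general n l p m α X Y hX hY

end
end

section
/- Suppose φ_α is increasing on [0,1], has a unique fixed point x ∈ (0,1), and φ_α′(x) < 1. Then D_α < 1, where D_α = sup_{y ∈ [0,1], y ≠ x} |φ_α(y) − x| / |y − x|. -/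
open MeasureTheory ProbabilityTheory Real Set

noncomputable section

/-! The difference quotient `y ↦ (φ(y) - x)/(y - x)`, extended by `φ'(x)` at `x`
(`dslope φ x`), is continuous on `[0,1]`. It is `< 1` at `x` by assumption, and `< 1` elsewhere
because `φ - id` has no zero but `x` and so, by the intermediate value theorem, `φ(y) > y` left of `x` and
`φ(y) < y` right of it. Its maximum over the compact interval is therefore `< 1`, and monotonicity
makes it nonnegative, hence equal to `|φ(y) - x|/|y - x|`. -/

@[fun_prop]
theorem Real.differentiable_tanh : Differentiable ℝ tanh := by
  rw [show tanh = fun x => sinh x / cosh x from funext tanh_eq_sinh_div_cosh]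
  exact differentiable_sinh.div differentiable_cosh fun x => (cosh_pos x).ne'

theorem one_add_tanh_div_two_mem_Ioo (t : ℝ) : (1 + tanh t) / 2 ∈ Ioo 0 1 :=
  ⟨by linarith [neg_one_lt_tanh t], by linarith [tanh_lt_one t]⟩

section UniqueFixedPoint

open Function

variable {f : ℝ → ℝ} {a b x y : ℝ}

theorem lt_apply_of_lt_of_unique_fixedPt (hf : ContinuousOn f (Icc a b)) (ha : a ≤ f a)
    (huniq : ∀ z ∈ Icc a b, IsFixedPt f z → z = x) (hy : y ∈ Icc a b) (hyx : y < x) :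
    y < f y := by
  by_contra! hfy
  obtain ⟨z, hz, hfz⟩ : ∃ z ∈ Icc a y, f z - z = 0 :=
    intermediate_value_Icc' hy.1 ((hf.mono (Icc_subset_Icc_right hy.2)).sub continuousOn_id)
      ⟨sub_nonpos.2 hfy, sub_nonneg.2 ha⟩
  exact (hz.2.trans_lt hyx).ne (huniq z ⟨hz.1, hz.2.trans hy.2⟩ (sub_eq_zero.1 hfz))

theorem apply_lt_of_lt_of_unique_fixedPt (hf : ContinuousOn f (Icc a b)) (hb : f b ≤ b)
    (huniq : ∀ z ∈ Icc a b, IsFixedPt f z → z = x) (hy : y ∈ Icc a b) (hxy : x < y) :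
    f y < y := by
  by_contra! hfy
  obtain ⟨z, hz, hfz⟩ : ∃ z ∈ Icc y b, f z - z = 0 :=
    intermediate_value_Icc' hy.2 ((hf.mono (Icc_subset_Icc_left hy.1)).sub continuousOn_id)
      ⟨sub_nonpos.2 hb, sub_nonneg.2 hfy⟩
  exact (hxy.trans_le hz.1).ne' (huniq z ⟨hy.1.trans hz.1, hz.2⟩ (sub_eq_zero.1 hfz))

theorem slope_lt_one_of_unique_fixedPt (hf : ContinuousOn f (Icc a b)) (ha : a ≤ f a)
    (hb : f b ≤ b) (hx : IsFixedPt f x) (huniq : ∀ z ∈ Icc a b, IsFixedPt f z → z = x)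
    (hy : y ∈ Icc a b) (hyx : y ≠ x) : slope f x y < 1 := by
  rw [slope_def_field, hx.eq]
  rcases hyx.lt_or_gt with hlt | hgt
  · rw [div_lt_one_of_neg (sub_neg.2 hlt)]
    linarith [lt_apply_of_lt_of_unique_fixedPt hf ha huniq hy hlt]
  · rw [div_lt_one (sub_pos.2 hgt)]
    linarith [apply_lt_of_lt_of_unique_fixedPt hf hb huniq hy hgt]

theorem MonotoneOn.abs_sub_div_abs_sub_eq_slope {s : Set ℝ} (hmono : MonotoneOn f s)
    (hx : x ∈ s) (hy : y ∈ s) : |f y - f x| / |y - x| = slope f x y := by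
  rw [← abs_div, ← slope_def_field, abs_of_nonneg (hmono.slope_nonneg hx hy)]

theorem sSup_abs_sub_div_abs_sub_lt_one_of_unique_fixedPt (hf : ContinuousOn f (Icc a b))
    (hfx : DifferentiableAt ℝ f x) (hderiv : deriv f x < 1) (hmono : MonotoneOn f (Icc a b))
    (ha : a ≤ f a) (hb : f b ≤ b) (hx : x ∈ Ioo a b) (hfix : IsFixedPt f x)
    (huniq : ∀ z ∈ Icc a b, IsFixedPt f z → z = x) :
    sSup {r : ℝ | ∃ y ∈ Icc a b, y ≠ x ∧ r = |f y - x| / |y - x|} < 1 := by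
  have hdslope : ContinuousOn (dslope f x) (Icc a b) :=
    (continuousOn_dslope (Icc_mem_nhds hx.1 hx.2)).2 ⟨hf, hfx⟩
  obtain ⟨z, hz, hmax⟩ :=
    isCompact_Icc.exists_isMaxOn ⟨x, Ioo_subset_Icc_self hx⟩ hdslope
  have hz_lt : dslope f x z < 1 := by
    rcases eq_or_ne z x with rfl | hzx
    · rwa [dslope_same]
    · rw [dslope_of_ne f hzx]
      exact slope_lt_one_of_unique_fixedPt hf ha hb hfix huniq hz hzx
  refine (Real.sSup_le ?_ (le_max_left 0 _)).trans_lt (max_lt one_pos hz_lt)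
  rintro r ⟨y, hy, hyx, rfl⟩
  calc |f y - x| / |y - x| = dslope f x y := by
        rw [dslope_of_ne f hyx, ← hmono.abs_sub_div_abs_sub_eq_slope (Ioo_subset_Icc_self hx) hy,
          hfix.eq]
    _ ≤ dslope f x z := hmax hy
    _ ≤ max 0 (dslope f x z) := le_max_right _ _

end UniqueFixedPoint

theorem differentiable_phiA (n l : ℕ) (p : ℝ) (m : Fin l → ℕ) (α : Fin l → ℝ) :
    Differentiable ℝ (phiA n l p m α) := by
  unfold phiA
  fun_prop

theorem stmt9_general (n l : ℕ) (p : ℝ) (m : Fin l → ℕ) (α : Fin l → ℝ)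
    (hmono : MonotoneOn (phiA n l p m α) (Set.Icc 0 1))
    (x : ℝ) (hx : x ∈ Set.Ioo (0:ℝ) 1) (hfix : phiA n l p m α x = x)
    (huniq : ∀ y ∈ Set.Icc (0:ℝ) 1, phiA n l p m α y = y → y = x)
    (hderiv : deriv (phiA n l p m α) x < 1) :
    sSup {r : ℝ | ∃ y ∈ Set.Icc (0:ℝ) 1, y ≠ x ∧ r = |phiA n l p m α y - x| / |y - x|}
      < 1 :=
  sSup_abs_sub_div_abs_sub_lt_one_of_unique_fixedPt
    (differentiable_phiA n l p m α).continuous.continuousOn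
    (differentiable_phiA n l p m α x) hderiv hmono (one_add_tanh_div_two_mem_Ioo _).1.le
    (one_add_tanh_div_two_mem_Ioo _).2.le hx hfix huniq

/-- if `φ_α` is increasing, has a unique fixed point `x ∈ (0,1)` and
`φ_α'(x) < 1`, then `D_α = sup_{y ≠ x} |φ_α(y) - x|/|y - x| < 1`. -/
theorem stmt9 (n l : ℕ) (hn : 0 < n) (p : ℝ) (hp : p ∈ Set.Ioo (0:ℝ) 1)
    (m : Fin l → ℕ) (hm : ∀ q, 2 ≤ m q) (hminj : Function.Injective m)
    (α : Fin l → ℝ)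
    (hmono : MonotoneOn (phiA n l p m α) (Set.Icc 0 1))
    (x : ℝ) (hx : x ∈ Set.Ioo (0:ℝ) 1) (hfix : phiA n l p m α x = x)
    (huniq : ∀ y ∈ Set.Icc (0:ℝ) 1, phiA n l p m α y = y → y = x)
    (hderiv : deriv (phiA n l p m α) x < 1) :
    sSup {r : ℝ | ∃ y ∈ Set.Icc (0:ℝ) 1, y ≠ x ∧ r = |phiA n l p m α y - x| / |y - x|}
      < 1 :=
  stmt9_general n l p m α hmono x hx hfix huniq hderiv

end
end

section
/- Suppose α_q ≥ 0 for all q, the equation x = φ_α(x) has a unique solution x, D_α < 1, and additionally C_α ≤ 1/D_α. Then for every X ∈ X_f, ‖X − x·1ₙ‖₁ ≤ (10000 C_α² + 1) n^{15/16}. -/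
open MeasureTheory ProbabilityTheory Real Set

noncomputable section

/-!
Write `s` for the mean of `X`. The tuples of distinct indices avoiding `j` make up a fraction
`∏ (1 - i/n) ≥ 1 - (m-1)/√n` of all tuples, so `C_j^m(X)/n^{m-1}` is within `(m-1)/√n` of
`∏ (1 - i/n) · s^{m-1}`, and each coordinate of `∇f(X)` is within `C_α/√n` of the argument of
`tanh` in `φ_α(s)`. As `tanh` is 1-Lipschitz, `X` is within `5000 C_α² n^{7/8} + C_α √n / 2` of
the constant vector `φ_α(s)` in `ℓ¹`. Since `|φ_α(s) - x| ≤ D_α |s - x|` and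
`D_α ≤ 1/C_α ≤ 1/2`, this gives `‖X - x·1ₙ‖₁ ≤ 10000 C_α² n^{7/8} + C_α √n`, which is at most
`(10000 C_α² + 1) n^{15/16}` unless `n^{1/16} < 10000 C_α² + 1`; then the trivial bound
`‖X - x·1ₙ‖₁ ≤ n` suffices.
-/

open Finset

lemma abs_tanh_sub_tanh_le (a b : ℝ) : |tanh a - tanh b| ≤ |a - b| := by
  have hderiv (y : ℝ) : HasDerivAt tanh (1 / cosh y ^ 2) y := by
    have h := (hasDerivAt_sinh y).div (hasDerivAt_cosh y) (cosh_pos y).ne'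
    rw [← sq, ← sq, cosh_sq_sub_sinh_sq] at h
    rwa [show tanh = fun y => sinh y / cosh y from funext tanh_eq_sinh_div_cosh]
  have hbound (y : ℝ) : ‖1 / cosh y ^ 2‖ ≤ 1 := by
    rw [norm_of_nonneg (by positivity), div_le_one (by positivity)]
    nlinarith [one_le_cosh y]
  simpa only [norm_eq_abs, one_mul] using convex_univ.norm_image_sub_le_of_norm_hasDerivWithin_le
    (fun y _ => (hderiv y).hasDerivWithinAt) (fun y _ => hbound y) (mem_univ b) (mem_univ a)

lemma card_embedding_avoiding (n k : ℕ) (j : Fin n) :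
    #{g : Fin k ↪ Fin n | ∀ i, g i ≠ j} = (n - 1).descFactorial k := by
  rw [← Fintype.card_subtype, Fintype.card_congr ((Equiv.subtypeEquivRight fun g => by
      simp only [mem_compl_singleton_iff]).trans (Equiv.codRestrict (Fin k) ({j}ᶜ : Set (Fin n)))),
    Fintype.card_embedding_eq]
  simp [filter_ne']

lemma prod_one_sub_div_eq_descFactorial_div {n : ℕ} (hn : 0 < n) (k : ℕ) :
    ∏ i ∈ Icc 1 k, (1 - (i : ℝ) / n) = (n - 1).descFactorial k / (n : ℝ) ^ k := by
  induction k with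
  | zero => simp
  | succ k ih =>
    rw [prod_Icc_succ_top (by omega), ih, Nat.descFactorial_succ, pow_succ]
    rcases lt_or_ge k n with hk | hk
    · rw [Nat.cast_mul, Nat.cast_sub (by omega), Nat.cast_sub hn]
      field_simp
      push_cast
      ring
    · simp [Nat.descFactorial_eq_zero_iff_lt.2 (by omega : n - 1 < k)]

lemma descFactorial_div_pow_mem_Icc {n : ℕ} (hn : 0 < n) (k : ℕ) :
    ((n - 1).descFactorial k / (n : ℝ) ^ k) ∈ Set.Icc 0 1 := by
  refine ⟨by positivity, div_le_one_of_le₀ ?_ (by positivity)⟩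
  exact_mod_cast (Nat.descFactorial_le_pow _ _).trans (Nat.pow_le_pow_left (by omega) _)

lemma le_of_le_one_of_le_sq {t r : ℝ} (ht : 0 ≤ t) (h1 : r ≤ 1) (h2 : r ≤ t ^ 2) : r ≤ t := by
  rcases le_total t 1 with h | h <;> nlinarith

lemma one_sub_descFactorial_div_pow_le {n : ℕ} (hn : 0 < n) (k : ℕ) :
    1 - (n - 1).descFactorial k / (n : ℝ) ^ k ≤ k / √n := by
  have hn' : (0 : ℝ) < n := by exact_mod_cast hn
  -- With `z = (n - k)/n`: `z^k ≤ (n-1)⋯(n-k)/n^k`, and Bernoulli gives `z^k ≥ 1 - k²/n`.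
  set z : ℝ := ((n - k : ℕ) : ℝ) / n
  have hz' : 1 - k / n ≤ z := by
    rw [one_sub_div hn'.ne']
    refine div_le_div_of_nonneg_right ?_ hn'.le
    rw [sub_le_iff_le_add]
    exact_mod_cast (by omega : n ≤ n - k + k)
  have hpow : z ^ k ≤ (n - 1).descFactorial k / (n : ℝ) ^ k := by
    rw [div_pow]
    gcongr
    exact_mod_cast (show n - 1 + 1 = n by omega) ▸ Nat.pow_sub_le_descFactorial (n - 1) k
  have hbern := one_add_mul_le_pow (by linarith [show 0 ≤ z by positivity] : (-2 : ℝ) ≤ z - 1) k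
  rw [add_sub_cancel] at hbern
  apply le_of_le_one_of_le_sq (by positivity)
  · linarith [(descFactorial_div_pow_mem_Icc hn k).1]
  · rw [div_pow, sq_sqrt hn'.le]
    have : (k : ℝ) * (1 - z) ≤ k * (k / n) := by gcongr; linarith
    calc _ ≤ (k : ℝ) * (1 - z) := by linarith
      _ ≤ k ^ 2 / n := by rw [sq, mul_div_assoc]; exact this

lemma sum_pow_eq_sum_prod {n : ℕ} (X : Fin n → ℝ) (k : ℕ) :
    (∑ i, X i) ^ k = ∑ f : Fin k → Fin n, ∏ i, X (f i) := by
  rw [← Fintype.prod_sum, prod_const, card_univ, Fintype.card_fin]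

lemma Cvec_mem_Icc {n : ℕ} (m : ℕ) {X : Fin n → ℝ} (hX : ∀ i, X i ∈ Set.Icc 0 1) (j : Fin n) :
    Cvec n m X j ∈ Set.Icc ((∑ i, X i) ^ (m - 1) - (n ^ (m - 1) - (n - 1).descFactorial (m - 1)))
      ((∑ i, X i) ^ (m - 1)) := by
  -- Among all `n^(m-1)` tuples, those that are not injective or hit `j` each contribute `≤ 1`.
  set w : (Fin (m - 1) → Fin n) → ℝ := fun f => ∏ i, X (f i)
  set F := ({g : Fin (m - 1) ↪ Fin n | ∀ i, g i ≠ j} : Finset _).map ⟨_, DFunLike.coe_injective⟩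
  have hCvec : Cvec n m X j = ∑ f ∈ F, w f := by rw [sum_map]; rfl
  have hsplit : (∑ i, X i) ^ (m - 1) = ∑ f ∈ F, w f + ∑ f ∈ Fᶜ, w f := by
    rw [sum_pow_eq_sum_prod, sum_add_sum_compl]
  have hcompl : ∑ f ∈ Fᶜ, w f ≤ (n : ℝ) ^ (m - 1) - (n - 1).descFactorial (m - 1) := by
    calc ∑ f ∈ Fᶜ, w f ≤ #Fᶜ := by
          simpa using sum_le_card_nsmul Fᶜ w 1 fun f _ => prod_le_one (fun i _ => (hX _).1)
            fun i _ => (hX _).2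
      _ = _ := by
          rw [card_compl, card_map, card_embedding_avoiding, Fintype.card_fun, Fintype.card_fin,
            Fintype.card_fin, Nat.cast_sub ((Nat.descFactorial_le_pow _ _).trans
              (Nat.pow_le_pow_left (by omega) _))]
          push_cast
          rfl
  have hnonneg : 0 ≤ ∑ f ∈ Fᶜ, w f := sum_nonneg fun f _ => prod_nonneg fun i _ => (hX _).1
  rw [hCvec, hsplit]
  constructor <;> linarith

lemma sum_div_mem_Icc {n : ℕ} {X : Fin n → ℝ} (hX : ∀ i, X i ∈ Set.Icc 0 1) :
    (∑ i, X i) / n ∈ Set.Icc 0 1 := by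
  refine ⟨div_nonneg (sum_nonneg fun i _ => (hX i).1) n.cast_nonneg,
    div_le_one_of_le₀ ?_ n.cast_nonneg⟩
  simpa using sum_le_card_nsmul univ X 1 fun i _ => (hX i).2

lemma abs_Cvec_div_sub_le {n : ℕ} (m : ℕ) {X : Fin n → ℝ} (hX : ∀ i, X i ∈ Set.Icc 0 1)
    (j : Fin n) :
    |Cvec n m X j / (n : ℝ) ^ (m - 1) -
      (∏ i ∈ Icc 1 (m - 1), (1 - (i : ℝ) / n)) * ((∑ i, X i) / n) ^ (m - 1)| ≤
      ((m - 1 : ℕ) : ℝ) / √n := by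
  have hn : 0 < n := j.pos
  have hN : (0 : ℝ) < (n : ℝ) ^ (m - 1) := by positivity
  have hS : (∑ i, X i) ^ (m - 1) = (n : ℝ) ^ (m - 1) * ((∑ i, X i) / n) ^ (m - 1) := by
    rw [← mul_pow, mul_div_cancel₀ _ (by positivity)]
  have hs : ((∑ i, X i) / n) ^ (m - 1) ∈ Set.Icc 0 1 :=
    ⟨pow_nonneg (sum_div_mem_Icc hX).1 _, pow_le_one₀ (sum_div_mem_Icc hX).1 (sum_div_mem_Icc hX).2⟩
  obtain ⟨hlo, hhi⟩ := Cvec_mem_Icc m hX j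
  obtain ⟨hd0, hd1⟩ := descFactorial_div_pow_mem_Icc hn (m - 1)
  refine le_trans ?_ (one_sub_descFactorial_div_pow_le hn (m - 1))
  rw [prod_one_sub_div_eq_descFactorial_div hn, abs_le]
  rw [hS] at hlo hhi
  set N := (n : ℝ) ^ (m - 1)
  set d : ℝ := ((n - 1).descFactorial (m - 1) : ℝ)
  set t := ((∑ i, X i) / n) ^ (m - 1)
  rw [div_le_one hN] at hd1
  constructor
  · rw [le_sub_iff_add_le, le_div_iff₀ hN]
    field_simp
    nlinarith [hs.1, hs.2]
  · rw [sub_le_iff_le_add, div_le_iff₀ hN]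
    field_simp
    nlinarith [hs.1, hs.2]

lemma natCast_mul_natCast_sub_one (k : ℕ) : (k : ℝ) * ((k - 1 : ℕ) : ℝ) = k * (k - 1) := by
  cases k <;> simp

lemma sum_mul_abs_mul_le_Calpha {l : ℕ} (p : ℝ) (m : Fin l → ℕ) (α : Fin l → ℝ) :
    (∑ q, (m q : ℝ) * |α q| * ((m q - 1 : ℕ) : ℝ)) / 2 ≤ Calpha l p m α := by
  have h : ∑ q, (m q : ℝ) * |α q| * ((m q - 1 : ℕ) : ℝ) =
      ∑ q, |α q| * (m q : ℝ) * ((m q : ℝ) - 1) := by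
    refine sum_congr rfl fun q _ => ?_
    rw [mul_right_comm, natCast_mul_natCast_sub_one]
    ring
  rw [h, Calpha]
  linarith [le_max_right (2 : ℝ) (|Real.log (p / (1 - p))| / 2 +
    (∑ q, |α q| * (m q : ℝ) * ((m q : ℝ) - 1)) / 2), abs_nonneg (Real.log (p / (1 - p)))]

def phiArg (n l : ℕ) (p : ℝ) (m : Fin l → ℕ) (α : Fin l → ℝ) (y : ℝ) : ℝ :=
  Real.log (p / (1 - p)) / 2 +
    (∑ q, (m q : ℝ) * α q * (∏ i ∈ Icc 1 (m q - 1), (1 - (i : ℝ) / n)) * y ^ (m q - 1)) / 2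

lemma phiA_eq (n l : ℕ) (p : ℝ) (m : Fin l → ℕ) (α : Fin l → ℝ) (y : ℝ) :
    phiA n l p m α y = (1 + tanh (phiArg n l p m α y)) / 2 := rfl

lemma abs_gradf_sub_phiArg_le {n : ℕ} (l : ℕ) (p : ℝ) (m : Fin l → ℕ) (α : Fin l → ℝ)
    {X : Fin n → ℝ} (hX : ∀ i, X i ∈ Set.Icc 0 1) (j : Fin n) :
    |gradf n l p m α X j - phiArg n l p m α ((∑ i, X i) / n)| ≤ Calpha l p m α / √n := by
  have hdiff : gradf n l p m α X j - phiArg n l p m α ((∑ i, X i) / n) =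
      ∑ q, (m q : ℝ) * α q / 2 * (Cvec n (m q) X j / (n : ℝ) ^ (m q - 1) -
        (∏ i ∈ Icc 1 (m q - 1), (1 - (i : ℝ) / n)) * ((∑ i, X i) / n) ^ (m q - 1)) := by
    rw [gradf, phiArg, sum_div, ← sub_sub, add_sub_cancel_right, ← sum_sub_distrib]
    refine sum_congr rfl fun q _ => ?_
    field_simp
  calc _ ≤ ∑ q, (m q : ℝ) * |α q| / 2 * (((m q - 1 : ℕ) : ℝ) / √n) := by
        rw [hdiff]
        refine (abs_sum_le_sum_abs _ _).trans (sum_le_sum fun q _ => ?_)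
        rw [abs_mul, abs_div, abs_mul, Nat.abs_cast, abs_two]
        gcongr
        exact abs_Cvec_div_sub_le (m q) hX j
    _ = (∑ q, (m q : ℝ) * |α q| * ((m q - 1 : ℕ) : ℝ)) / 2 / √n := by
        rw [sum_div, sum_div]
        refine sum_congr rfl fun q _ => ?_
        ring
    _ ≤ Calpha l p m α / √n := by
        gcongr
        exact sum_mul_abs_mul_le_Calpha p m α

lemma abs_phiArg_sub_phiArg_le {n : ℕ} (hn : 0 < n) (l : ℕ) (p : ℝ) (m : Fin l → ℕ)
    (α : Fin l → ℝ) {y z : ℝ} (hy : y ∈ Set.Icc 0 1) (hz : z ∈ Set.Icc 0 1) :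
    |phiArg n l p m α y - phiArg n l p m α z| ≤ Calpha l p m α * |y - z| := by
  have hdiff : phiArg n l p m α y - phiArg n l p m α z =
      ∑ q, (m q : ℝ) * α q / 2 * (∏ i ∈ Icc 1 (m q - 1), (1 - (i : ℝ) / n)) *
        (y ^ (m q - 1) - z ^ (m q - 1)) := by
    rw [phiArg, phiArg, add_sub_add_left_eq_sub, ← sub_div, ← sum_sub_distrib, sum_div]
    refine sum_congr rfl fun q _ => ?_
    ring
  have hpow (k : ℕ) : |y ^ k - z ^ k| ≤ k * |y - z| := by
    have hmax : max |y| |z| ≤ 1 := by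
      rw [abs_of_nonneg hy.1, abs_of_nonneg hz.1]
      exact max_le hy.2 hz.2
    calc |y ^ k - z ^ k| ≤ |y - z| * k * max |y| |z| ^ (k - 1) := abs_pow_sub_pow_le y z k
      _ ≤ |y - z| * k * 1 := by gcongr; exact pow_le_one₀ (by positivity) hmax
      _ = k * |y - z| := by ring
  calc _ ≤ ∑ q, (m q : ℝ) * |α q| / 2 * 1 * (((m q - 1 : ℕ) : ℝ) * |y - z|) := by
        rw [hdiff]
        refine (abs_sum_le_sum_abs _ _).trans (sum_le_sum fun q _ => ?_)
        rw [abs_mul, abs_mul, abs_div, abs_mul, Nat.abs_cast, abs_two,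
          prod_one_sub_div_eq_descFactorial_div hn,
          abs_of_nonneg (descFactorial_div_pow_mem_Icc hn _).1]
        gcongr
        · exact (descFactorial_div_pow_mem_Icc hn _).2
        · exact hpow _
    _ = (∑ q, (m q : ℝ) * |α q| * ((m q - 1 : ℕ) : ℝ)) / 2 * |y - z| := by
        rw [sum_div, sum_mul]
        refine sum_congr rfl fun q _ => ?_
        ring
    _ ≤ Calpha l p m α * |y - z| := by
        gcongr
        exact sum_mul_abs_mul_le_Calpha p m α

lemma abs_Phi_sub_phiA_le {n : ℕ} (l : ℕ) (p : ℝ) (m : Fin l → ℕ) (α : Fin l → ℝ)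
    {X : Fin n → ℝ} (hX : ∀ i, X i ∈ Set.Icc 0 1) (j : Fin n) :
    |Phi n l p m α X j - phiA n l p m α ((∑ i, X i) / n)| ≤ Calpha l p m α / (2 * √n) := by
  rw [Phi, phiA_eq, add_div, add_div, add_sub_add_left_eq_sub, ← sub_div, abs_div, abs_two,
    mul_comm, ← div_div]
  gcongr
  exact (abs_tanh_sub_tanh_le _ _).trans (abs_gradf_sub_phiArg_le l p m α hX j)

lemma abs_phiA_sub_phiA_le {n : ℕ} (hn : 0 < n) (l : ℕ) (p : ℝ) (m : Fin l → ℕ)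
    (α : Fin l → ℝ) {y z : ℝ} (hy : y ∈ Set.Icc 0 1) (hz : z ∈ Set.Icc 0 1) :
    |phiA n l p m α y - phiA n l p m α z| ≤ Calpha l p m α / 2 * |y - z| := by
  rw [phiA_eq, phiA_eq, add_div, add_div, add_sub_add_left_eq_sub, ← sub_div, abs_div, abs_two,
    div_mul_eq_mul_div]
  gcongr
  exact (abs_tanh_sub_tanh_le _ _).trans (abs_phiArg_sub_phiArg_le hn l p m α hy hz)

lemma abs_sub_le_sSup_mul {f : ℝ → ℝ} {s : Set ℝ} {x C : ℝ}
    (hf : ∀ y ∈ s, |f y - x| ≤ C * |y - x|) {y : ℝ} (hy : y ∈ s) :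
    |f y - x| ≤ sSup {r : ℝ | ∃ y ∈ s, y ≠ x ∧ r = |f y - x| / |y - x|} * |y - x| := by
  rcases eq_or_ne y x with rfl | hyx
  · simpa using hf y hy
  · rw [← div_le_iff₀ (abs_pos.2 (sub_ne_zero.2 hyx))]
    refine le_csSup ⟨C, ?_⟩ ⟨y, hy, hyx, rfl⟩
    rintro _ ⟨z, hz, hzx, rfl⟩
    rw [div_le_iff₀ (abs_pos.2 (sub_ne_zero.2 hzx))]
    exact hf z hz

lemma sum_abs_sub_le_two_mul_of_contraction {n : ℕ} (X : Fin n → ℝ) {a x D A : ℝ}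
    (hD0 : 0 ≤ D) (hD : D ≤ 1 / 2) (hA : ∑ i, |X i - a| ≤ A)
    (ha : |a - x| ≤ D * |(∑ i, X i) / n - x|) :
    ∑ i, |X i - x| ≤ 2 * A := by
  obtain rfl | hn := n.eq_zero_or_pos
  · simp only [univ_eq_empty, sum_empty] at hA ⊢
    linarith
  -- `T := ∑ |X i - x| ≤ A + n |a - x| ≤ A + D T`.
  have hn' : (0 : ℝ) < n := by exact_mod_cast hn
  have hmean : (n : ℝ) * |(∑ i, X i) / n - x| ≤ ∑ i, |X i - x| :=
    calc (n : ℝ) * |(∑ i, X i) / n - x| = |∑ i, (X i - x)| := by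
          rw [sum_sub_distrib, sum_const, card_univ, Fintype.card_fin, nsmul_eq_mul,
            ← mul_div_cancel₀ (∑ i, X i) hn'.ne', ← mul_sub, abs_mul, abs_of_pos hn',
            mul_div_cancel_left₀ _ hn'.ne']
      _ ≤ ∑ i, |X i - x| := abs_sum_le_sum_abs _ _
  have htri : ∑ i, |X i - x| ≤ ∑ i, |X i - a| + n * |a - x| := by
    simpa [sum_add_distrib] using
      sum_le_sum fun i (_ : i ∈ Finset.univ) => abs_sub_le (X i) a x
  nlinarith [sum_nonneg fun i (_ : i ∈ Finset.univ) => abs_nonneg (X i - x)]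

lemma le_add_one_mul_rpow {N a C T : ℝ} (hN : 1 ≤ N) (ha : 0 ≤ a) (hC : C ≤ a + 1)
    (hTN : T ≤ N) (hT : T ≤ a * N ^ (7 / 8 : ℝ) + C * √N) : T ≤ (a + 1) * N ^ (15 / 16 : ℝ) := by
  have hN0 : 0 < N := by linarith
  rcases le_total (N ^ (1 / 16 : ℝ)) (a + 1) with h | h
  · calc T ≤ N ^ (1 / 16 : ℝ) * N ^ (15 / 16 : ℝ) := by
          rw [← rpow_add hN0]; norm_num; exact hTN
      _ ≤ (a + 1) * N ^ (15 / 16 : ℝ) := by gcongr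
  · have hsqrt : C * √N ≤ N ^ (15 / 16 : ℝ) :=
      calc C * √N ≤ N ^ (1 / 16 : ℝ) * N ^ (1 / 2 : ℝ) := by
            rw [sqrt_eq_rpow]; gcongr; linarith
        _ = N ^ (9 / 16 : ℝ) := by rw [← rpow_add hN0]; norm_num
        _ ≤ N ^ (15 / 16 : ℝ) := rpow_le_rpow_of_exponent_le hN (by norm_num)
    have h78 : N ^ (7 / 8 : ℝ) ≤ N ^ (15 / 16 : ℝ) := rpow_le_rpow_of_exponent_le hN (by norm_num)
    nlinarith

lemma pos_and_le_half_of_le_one_div {C D : ℝ} (hC : 2 ≤ C) (hCD : C ≤ 1 / D) :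
    0 < D ∧ D ≤ 1 / 2 := by
  have hD : 0 < D := by
    by_contra! h
    linarith [one_div_nonpos.2 h]
  exact ⟨hD, ((le_one_div (by linarith) hD).1 hCD).trans (one_div_le_one_div_of_le two_pos hC)⟩

lemma sum_abs_sub_le_card {n : ℕ} {X : Fin n → ℝ} (hX : ∀ i, X i ∈ Set.Icc 0 1) {x : ℝ}
    (hx : x ∈ Set.Icc 0 1) : ∑ i, |X i - x| ≤ n := by
  simpa using sum_le_card_nsmul univ (fun i => |X i - x|) 1 fun i _ =>
    abs_sub_le_iff.2 ⟨by linarith [(hX i).2, hx.1], by linarith [(hX i).1, hx.2]⟩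

lemma sum_abs_sub_phiA_le_of_mem_Xf {n l : ℕ} {p : ℝ} {m : Fin l → ℕ} {α : Fin l → ℝ}
    {X : Fin n → ℝ} (hX : X ∈ Xf n l p m α) :
    ∑ j, |X j - phiA n l p m α ((∑ i, X i) / n)| ≤
      5000 * Calpha l p m α ^ 2 * (n : ℝ) ^ (7 / 8 : ℝ) + Calpha l p m α * √n / 2 := by
  set s := (∑ i, X i) / n
  have hPhi : ∑ j, |Phi n l p m α X j - phiA n l p m α s| ≤ Calpha l p m α * √n / 2 :=
    calc _ ≤ ∑ _j : Fin n, Calpha l p m α / (2 * √n) :=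
          sum_le_sum fun j _ => abs_Phi_sub_phiA_le l p m α hX.1 j
      _ = Calpha l p m α / 2 * (n / √n) := by
        rw [sum_const, card_univ, Fintype.card_fin, nsmul_eq_mul]
        ring
      _ = Calpha l p m α * √n / 2 := by rw [div_sqrt]; ring
  calc _ ≤ ∑ j, (|X j - Phi n l p m α X j| + |Phi n l p m α X j - phiA n l p m α s|) :=
        sum_le_sum fun j _ => abs_sub_le _ _ _
    _ ≤ _ := by rw [sum_add_distrib]; exact add_le_add hX.2 hPhi

theorem stmt12_general (n l : ℕ) (hn : 0 < n) (p : ℝ) (m : Fin l → ℕ) (α : Fin l → ℝ)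
    (x : ℝ) (hx : x ∈ Set.Ioo (0:ℝ) 1) (hfix : x = phiA n l p m α x)
    (Dα : ℝ)
    (hD : Dα = sSup {r : ℝ | ∃ y ∈ Set.Icc (0:ℝ) 1, y ≠ x ∧
      r = |phiA n l p m α y - x| / |y - x|})
    (hCD : Calpha l p m α ≤ 1 / Dα) :
    ∀ X ∈ Xf n l p m α,
      norm1 n (fun i => X i - x) ≤
        (10000 * (Calpha l p m α) ^ 2 + 1) * (n : ℝ) ^ ((15:ℝ)/16) := by
  intro X hXf
  set C := Calpha l p m α
  set s := (∑ i, X i) / n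
  have hC : 2 ≤ C := le_max_left _ _
  have hx' : x ∈ Set.Icc 0 1 := Set.Ioo_subset_Icc_self hx
  obtain ⟨hD0, hD_half⟩ := pos_and_le_half_of_le_one_div hC hCD
  have hcontr : |phiA n l p m α s - x| ≤ Dα * |s - x| := by
    refine hD ▸ abs_sub_le_sSup_mul (C := C / 2) (fun y hy => ?_) (sum_div_mem_Icc hXf.1)
    nth_rewrite 1 [hfix]
    exact abs_phiA_sub_phiA_le hn l p m α hy hx'
  have hmain := sum_abs_sub_le_two_mul_of_contraction X hD0.le hD_half
    (sum_abs_sub_phiA_le_of_mem_Xf hXf) hcontr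
  exact le_add_one_mul_rpow (C := C) (T := ∑ i, |X i - x|) (by exact_mod_cast hn)
    (by positivity) (by nlinarith) (sum_abs_sub_le_card hXf.1 hx') (by linarith)

/-- under the additional assumption `C_α ≤ 1/D_α`, every `X ∈ X_f`
satisfies `‖X - x·1ₙ‖₁ ≤ (10000 C_α² + 1) n^{15/16}`. -/
theorem stmt12 (n l : ℕ) (hn : 0 < n) (p : ℝ) (hp : p ∈ Set.Ioo (0:ℝ) 1)
    (m : Fin l → ℕ) (hm : ∀ q, 2 ≤ m q) (hminj : Function.Injective m)
    (α : Fin l → ℝ) (hα : ∀ q, 0 ≤ α q)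
    (x : ℝ) (hx : x ∈ Set.Ioo (0:ℝ) 1) (hfix : x = phiA n l p m α x)
    (huniq : ∀ y ∈ Set.Icc (0:ℝ) 1, y = phiA n l p m α y → y = x)
    (Dα : ℝ)
    (hD : Dα = sSup {r : ℝ | ∃ y ∈ Set.Icc (0:ℝ) 1, y ≠ x ∧
      r = |phiA n l p m α y - x| / |y - x|})
    (hD1 : Dα < 1) (hCD : Calpha l p m α ≤ 1 / Dα) :
    ∀ X ∈ Xf n l p m α,
      norm1 n (fun i => X i - x) ≤
        (10000 * (Calpha l p m α) ^ 2 + 1) * (n : ℝ) ^ ((15:ℝ)/16) :=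
  stmt12_general n l hn p m α x hx hfix Dα hD hCD

end
end

section
/- Let Φ : [0,1]^n → [0,1]^n be Φ(X) = (1ₙ + tanh(∇f(X)))/2 and set J_α = ¼ Σ_{q=1}^l |α_q| m_q (m_q − 1). Then for all X, Y ∈ [0,1]^n, ‖Φ(X) − Φ(Y)‖₁ ≤ J_α ‖X − Y‖₁; in particular, if J_α < 1 then Φ is a contraction in the 1-norm. -/
open MeasureTheory ProbabilityTheory Real Set

noncomputable section

/-!
`Φ` is `∇f` followed by the coordinatewise map `(1 + tanh)/2`, which is `1/2`-Lipschitz, so it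
suffices to bound `|∂ⱼf(X) - ∂ⱼf(Y)|`. On the unit cube a difference of two products is at most the
sum of the differences of the factors, and a fixed index occurs in at most `(m-1) n^(m-2)` of the
injective `(m-1)`-tuples, so `|C_j^m(X) - C_j^m(Y)| ≤ (m-1) n^(m-2) ‖X - Y‖₁`. After the
normalisation `n^(m-1)` each coordinate of `∇f` moves by at most `2 J_α ‖X - Y‖₁ / n`, and summing
over the `n` coordinates gives the claim.
-/

open Finset

lemma hasDerivAt_tanh (x : ℝ) : HasDerivAt tanh (1 / cosh x ^ 2) x := by
  have h := (hasDerivAt_sinh x).div (hasDerivAt_cosh x) (cosh_pos x).ne'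
  rw [show sinh / cosh = tanh from funext fun y => (tanh_eq_sinh_div_cosh y).symm] at h
  refine h.congr_deriv ?_
  rw [← cosh_sq_sub_sinh_sq x]
  ring

lemma abs_prod_sub_prod_le {ι : Type*} (s : Finset ι) {a b : ι → ℝ}
    (ha : ∀ i ∈ s, |a i| ≤ 1) (hb : ∀ i ∈ s, |b i| ≤ 1) :
    |∏ i ∈ s, a i - ∏ i ∈ s, b i| ≤ ∑ i ∈ s, |a i - b i| := by
  induction s using Finset.cons_induction with
  | empty => simp
  | cons i s hi ih =>
    simp only [mem_cons, forall_eq_or_imp] at ha hb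
    rw [prod_cons, prod_cons, sum_cons]
    have hprod : |∏ j ∈ s, a j| ≤ 1 := by
      rw [abs_prod]
      exact prod_le_one (fun _ _ => abs_nonneg _) ha.2
    calc |a i * ∏ j ∈ s, a j - b i * ∏ j ∈ s, b j|
        = |(a i - b i) * ∏ j ∈ s, a j + b i * (∏ j ∈ s, a j - ∏ j ∈ s, b j)| := by ring_nf
      _ ≤ |a i - b i| * |∏ j ∈ s, a j| + |b i| * |∏ j ∈ s, a j - ∏ j ∈ s, b j| := by
        rw [← abs_mul, ← abs_mul]; exact abs_add_le _ _
      _ ≤ |a i - b i| * 1 + 1 * ∑ j ∈ s, |a j - b j| :=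
        add_le_add (mul_le_mul_of_nonneg_left hprod (abs_nonneg _))
          (mul_le_mul hb.1 (ih ha.2 hb.2) (abs_nonneg _) zero_le_one)
      _ = |a i - b i| + ∑ j ∈ s, |a j - b j| := by ring

lemma sum_apply_eq_card_pow_smul {ι M : Type*} [Fintype ι] [AddCommMonoid M] (r : ℕ)
    (k : Fin (r + 1)) (d : ι → M) :
    ∑ g : Fin (r + 1) → ι, d (g k) = Fintype.card ι ^ r • ∑ i, d i := by
  classical
  rw [← (Fin.insertNthEquiv (fun _ => ι) k).sum_comp, Fintype.sum_prod_type]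
  simp [sum_const, sum_nsmul]

lemma sum_embedding_sum_le {ι : Type*} [Fintype ι] (r : ℕ) {d : ι → ℝ} (hd : 0 ≤ d) :
    ∑ g : Fin r ↪ ι, ∑ k, d (g k) ≤ r * (Fintype.card ι : ℝ) ^ (r - 1) * ∑ i, d i := by
  rcases r with _ | r
  · simp
  calc ∑ g : Fin (r + 1) ↪ ι, ∑ k, d (g k)
      ≤ ∑ g : Fin (r + 1) → ι, ∑ k, d (g k) :=
        (sum_map univ ⟨fun g : Fin (r + 1) ↪ ι => ⇑g, DFunLike.coe_injective⟩
          (fun g => ∑ k, d (g k))).symm.trans_le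
          (sum_le_univ_sum_of_nonneg fun g => sum_nonneg fun k _ => hd _)
    _ = (r + 1 : ℕ) * (Fintype.card ι : ℝ) ^ r * ∑ i, d i := by
        rw [sum_comm]
        simp [sum_apply_eq_card_pow_smul, nsmul_eq_mul, mul_assoc]

lemma abs_Cvec_sub_le {n : ℕ} (m : ℕ) {X Y : Fin n → ℝ} (hX : ∀ i, X i ∈ Icc (0 : ℝ) 1)
    (hY : ∀ i, Y i ∈ Icc (0 : ℝ) 1) (j : Fin n) :
    |Cvec n m X j - Cvec n m Y j| ≤ ((m - 1 : ℕ) : ℝ) * (n : ℝ) ^ (m - 2) * norm1 n (X - Y) := by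
  have hunit : ∀ {Z : Fin n → ℝ}, (∀ i, Z i ∈ Icc (0 : ℝ) 1) → ∀ i, |Z i| ≤ 1 :=
    fun hZ i => abs_le.mpr ⟨by linarith [(hZ i).1], (hZ i).2⟩
  calc |Cvec n m X j - Cvec n m Y j|
      ≤ ∑ g ∈ univ.filter (fun g : Fin (m - 1) ↪ Fin n => ∀ k, g k ≠ j),
          |∏ k, X (g k) - ∏ k, Y (g k)| := by
        rw [Cvec, Cvec, ← sum_sub_distrib]
        exact abs_sum_le_sum_abs _ _
    _ ≤ ∑ g : Fin (m - 1) ↪ Fin n, ∑ k, |X (g k) - Y (g k)| :=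
        sum_le_sum_of_subset_of_nonneg (filter_subset _ _) (fun g _ _ => by positivity)
          |>.trans' <| sum_le_sum fun g _ =>
            abs_prod_sub_prod_le _ (fun k _ => hunit hX _) (fun k _ => hunit hY _)
    _ ≤ ((m - 1 : ℕ) : ℝ) * (n : ℝ) ^ (m - 2) * norm1 n (X - Y) := by
        simpa [Nat.sub_sub, norm1] using
          sum_embedding_sum_le (m - 1) (fun i => abs_nonneg (X i - Y i))

lemma abs_gradf_sub_le {n l : ℕ} (p : ℝ) (m : Fin l → ℕ) (α : Fin l → ℝ) {X Y : Fin n → ℝ}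
    (hX : ∀ i, X i ∈ Icc (0 : ℝ) 1) (hY : ∀ i, Y i ∈ Icc (0 : ℝ) 1) (j : Fin n) :
    |gradf n l p m α X j - gradf n l p m α Y j| ≤
      (∑ q, |α q| * (m q : ℝ) * ((m q : ℝ) - 1)) / (2 * n) * norm1 n (X - Y) := by
  have hn : (0 : ℝ) < n := by exact_mod_cast j.pos
  have hcoeff : ∀ q, |(m q : ℝ) * α q / (2 * (n : ℝ) ^ (m q - 1))| *
      (((m q - 1 : ℕ) : ℝ) * (n : ℝ) ^ (m q - 2)) = |α q| * m q * (m q - 1) / (2 * n) := by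
    intro q
    rcases m q with _ | _ | k
    · simp
    · simp
    · simp only [Nat.add_sub_cancel]
      rw [abs_div, abs_mul, abs_of_nonneg (by positivity : (0 : ℝ) ≤ ((k + 2 : ℕ) : ℝ)),
        abs_of_pos (by positivity : (0 : ℝ) < 2 * (n : ℝ) ^ (k + 1))]
      field_simp
      push_cast
      ring
  calc |gradf n l p m α X j - gradf n l p m α Y j|
      = |∑ q, (m q : ℝ) * α q / (2 * (n : ℝ) ^ (m q - 1)) *
          (Cvec n (m q) X j - Cvec n (m q) Y j)| := by
        simp only [gradf, add_sub_add_right_eq_sub, ← sum_sub_distrib, mul_sub]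
    _ ≤ ∑ q, |(m q : ℝ) * α q / (2 * (n : ℝ) ^ (m q - 1))| *
          (((m q - 1 : ℕ) : ℝ) * (n : ℝ) ^ (m q - 2) * norm1 n (X - Y)) := by
        refine (abs_sum_le_sum_abs _ _).trans (sum_le_sum fun q _ => ?_)
        rw [abs_mul]
        exact mul_le_mul_of_nonneg_left (abs_Cvec_sub_le _ hX hY j) (abs_nonneg _)
    _ = (∑ q, |α q| * (m q : ℝ) * ((m q : ℝ) - 1)) / (2 * n) * norm1 n (X - Y) := by
        simp only [← mul_assoc, hcoeff, ← sum_mul, ← sum_div]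

theorem stmt13_general (n l : ℕ) (p : ℝ)
    (m : Fin l → ℕ)
    (α : Fin l → ℝ) (X Y : Fin n → ℝ)
    (hX : ∀ i, X i ∈ Set.Icc (0:ℝ) 1) (hY : ∀ i, Y i ∈ Set.Icc (0:ℝ) 1) :
    norm1 n (fun j => Phi n l p m α X j - Phi n l p m α Y j) ≤
      ((∑ q, |α q| * (m q : ℝ) * ((m q : ℝ) - 1)) / 4) * norm1 n (fun i => X i - Y i) := by
  rcases Nat.eq_zero_or_pos n with rfl | hn
  · simp [norm1]
  set J := ∑ q, |α q| * (m q : ℝ) * ((m q : ℝ) - 1)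
  change _ ≤ J / 4 * norm1 n (X - Y)
  calc norm1 n (fun j => Phi n l p m α X j - Phi n l p m α Y j)
      = ∑ j, |tanh (gradf n l p m α X j) - tanh (gradf n l p m α Y j)| / 2 := by
        refine sum_congr rfl fun j _ => ?_
        simp only [Phi]
        rw [← sub_div, add_sub_add_left_eq_sub, abs_div, abs_two]
    _ ≤ ∑ _j : Fin n, J / (2 * n) * norm1 n (X - Y) / 2 := by
        gcongr with j
        exact (abs_tanh_sub_tanh_le _ _).trans (abs_gradf_sub_le p m α hX hY j)
    _ = J / 4 * norm1 n (X - Y) := by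
        rw [sum_const, card_univ, Fintype.card_fin, nsmul_eq_mul]
        field_simp
        ring

/-- for all `X, Y ∈ [0,1]ⁿ`,
`‖Φ(X) - Φ(Y)‖₁ ≤ J_α ‖X - Y‖₁` with `J_α = ¼ Σ_q |α_q| m_q (m_q - 1)`; in
particular `Φ` is a 1-norm contraction when `J_α < 1`. -/
theorem stmt13 (n l : ℕ) (p : ℝ) (hp : p ∈ Set.Ioo (0:ℝ) 1)
    (m : Fin l → ℕ) (hm : ∀ q, 2 ≤ m q) (hminj : Function.Injective m)
    (α : Fin l → ℝ) (X Y : Fin n → ℝ)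
    (hX : ∀ i, X i ∈ Set.Icc (0:ℝ) 1) (hY : ∀ i, Y i ∈ Set.Icc (0:ℝ) 1) :
    norm1 n (fun j => Phi n l p m α X j - Phi n l p m α Y j) ≤
      ((∑ q, |α q| * (m q : ℝ) * ((m q : ℝ) - 1)) / 4) * norm1 n (fun i => X i - Y i) :=
  stmt13_general n l p m α X Y hX hY

end
end

section
/- Let n > 4 be an even integer and α > 0. Then for every b ∈ [0,1] there exists a unique a ∈ (0,1) satisfying 1 − 2a = tanh( (α/(2n²)) (n/2 − 1) ( (n/2)(a + b)² − 2a² ) ). -/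
open MeasureTheory ProbabilityTheory Real Set

noncomputable section

namespace Real

theorem tanh_strictMono : StrictMono tanh := fun x y hxy => by
  by_contra! h
  have := artanh_le_artanh (neg_one_lt_tanh y) (tanh_lt_one x) h
  rw [artanh_tanh, artanh_tanh] at this
  linarith

@[fun_prop]
theorem continuous_tanh : Continuous tanh := by
  rw [show tanh = fun x => sinh x / cosh x from funext tanh_eq_sinh_div_cosh]
  exact continuous_sinh.div continuous_cosh fun x => (cosh_pos x).ne'

end Real

theorem existsUnique_mem_Ioo_one_sub_two_mul_eq_tanh {g : ℝ → ℝ}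
    (hg : ContinuousOn g (Icc 0 1)) (hg_mono : MonotoneOn g (Icc 0 1)) :
    ∃! a : ℝ, a ∈ Ioo (0:ℝ) 1 ∧ 1 - 2 * a = tanh (g a) := by
  set F : ℝ → ℝ := fun a => (2 * a - 1) + tanh (g a)
  have hF_strictMono : StrictMonoOn F (Icc 0 1) :=
    StrictMonoOn.add_monotone (fun x _ y _ hxy => by linarith)
      (fun x hx y hy hxy => tanh_strictMono.monotone (hg_mono hx hy hxy))
  have hF_cont : ContinuousOn F (Icc 0 1) := by fun_prop
  have hF_zero : F 0 < 0 := by linarith [tanh_lt_one (g 0)]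
  have hF_one : 0 < F 1 := by linarith [neg_one_lt_tanh (g 1)]
  have hF_eq_zero {a : ℝ} : F a = 0 ↔ 1 - 2 * a = tanh (g a) := by
    constructor <;> intro h <;> linarith
  obtain ⟨a, ha, hFa⟩ := intermediate_value_Ioo zero_le_one hF_cont ⟨hF_zero, hF_one⟩
  refine ⟨a, ⟨ha, hF_eq_zero.mp hFa⟩, fun y ⟨hy, hy_eq⟩ => ?_⟩
  exact hF_strictMono.injOn (Ioo_subset_Icc_self hy) (Ioo_subset_Icc_self ha)
    (by rw [hF_eq_zero.mpr hy_eq, hFa])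

theorem monotoneOn_quadratic_Ici {c N b : ℝ} (hc : 0 ≤ c) (hN : 4 ≤ N) (hb : 0 ≤ b) :
    MonotoneOn (fun a => c * (N / 2 * (a + b) ^ 2 - 2 * a ^ 2)) (Ici 0) := by
  intro x (hx : 0 ≤ x) y _ hxy
  have h_incr : 0 ≤ (N / 2 * (y + b) ^ 2 - 2 * y ^ 2) - (N / 2 * (x + b) ^ 2 - 2 * x ^ 2) := by
    -- the increment factors as `(y - x) ((N/2 - 2)(x + y) + N b)`
    have h_factored : 0 ≤ (y - x) * ((N / 2 - 2) * (x + y) + N * b) := by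
      apply mul_nonneg <;> nlinarith
    linarith
  exact mul_le_mul_of_nonneg_left (by linarith) hc

theorem stmt16_general (n : ℕ) (hn : 4 < n) (α : ℝ) (hα : 0 < α)
    (b : ℝ) (hb : b ∈ Set.Icc (0:ℝ) 1) :
    ∃! a : ℝ, a ∈ Set.Ioo (0:ℝ) 1 ∧
      1 - 2 * a = Real.tanh (α / (2 * (n:ℝ)^2) * ((n:ℝ)/2 - 1) *
        ((n:ℝ)/2 * (a + b)^2 - 2 * a^2)) := by
  have hn4 : (4:ℝ) ≤ n := by exact_mod_cast hn.le
  have hc : 0 ≤ α / (2 * (n:ℝ)^2) * ((n:ℝ)/2 - 1) :=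
    mul_nonneg (by positivity) (by linarith)
  refine existsUnique_mem_Ioo_one_sub_two_mul_eq_tanh (by fun_prop) ?_
  exact (monotoneOn_quadratic_Ici hc hn4 hb.1).mono Icc_subset_Ici_self

/-- for even `n > 4` and `α > 0`, for every `b ∈ [0,1]` there is a unique
`a ∈ (0,1)` with `1 - 2a = tanh((α/(2n²))(n/2 - 1)((n/2)(a+b)² - 2a²))`. -/
theorem stmt16 (n : ℕ) (hn : 4 < n) (hne : Even n) (α : ℝ) (hα : 0 < α)
    (b : ℝ) (hb : b ∈ Set.Icc (0:ℝ) 1) :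
    ∃! a : ℝ, a ∈ Set.Ioo (0:ℝ) 1 ∧
      1 - 2 * a = Real.tanh (α / (2 * (n:ℝ)^2) * ((n:ℝ)/2 - 1) *
        ((n:ℝ)/2 * (a + b)^2 - 2 * a^2)) :=
  stmt16_general n hn α hα b hb

end
end

section
/- Let n > 4 be an even integer and set N = (1/(2n²))(n/2 − 1)(n/2 − 2). For α > 0 let a₂ = a₂(α) ∈ (0,1) be the unique solution of 1 − 2a = tanh(N α a²). Then there exists α₀ > 0 such that for all α ≥ α₀, a₂ < √( log(4Nα) / (4Nα) ); equivalently, a₂ < √( n² log( (4α/n²) · binom(n/2 − 1, 2) ) / ( 4α · binom(n/2 − 1, 2) ) ). -/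
open MeasureTheory ProbabilityTheory Real Set

noncomputable section

theorem one_sub_tanh_lt_two_mul_exp (x : ℝ) : 1 - tanh x < 2 * exp (-(2 * x)) := by
  have hcosh : 0 < exp x + exp (-x) := by positivity
  have hsum : 1 - tanh x = 2 * exp (-x) / (exp x + exp (-x)) := by
    rw [tanh_eq, eq_div_iff hcosh.ne']
    field_simp
    ring
  have hsq : exp (-(2 * x)) = exp (-x) * exp (-x) := by rw [← exp_add]; ring_nf
  rw [hsum, hsq, div_lt_iff₀ hcosh]
  have hinv : exp (-x) * exp x = 1 := by rw [← exp_add, neg_add_cancel, exp_zero]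
  nlinarith [pow_pos (exp_pos (-x)) 3]

/-- If `4c a² ≥ log (4c)`, then `2a = 1 - tanh (c a²) < 2 e^{-2c a²} ≤ 2 / √(4c)`,
so `4c a² < 1 ≤ log (4c)`. -/
theorem lt_sqrt_log_div_of_one_sub_two_mul_eq_tanh {c a : ℝ} (hc : exp 1 ≤ 4 * c)
    (h : 1 - 2 * a = tanh (c * a ^ 2)) : a < √(log (4 * c) / (4 * c)) := by
  set x := 4 * c with hx
  have hx_pos : 0 < x := (exp_pos 1).trans_le hc
  have hlog : 1 ≤ log x := by simpa using log_le_log (exp_pos 1) hc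
  by_contra! hle
  have ha : 0 ≤ a := (sqrt_nonneg _).trans hle
  have hlog_le : log x ≤ x * a ^ 2 := by
    rw [sqrt_le_left ha, div_le_iff₀ hx_pos] at hle
    linarith
  have ha_lt : a < exp (-(log x / 2)) := by
    calc a < exp (-(2 * (c * a ^ 2))) := by linarith [one_sub_tanh_lt_two_mul_exp (c * a ^ 2)]
      _ ≤ exp (-(log x / 2)) := exp_le_exp.mpr (by rw [hx] at hlog_le; linarith)
  have hsq_lt : a ^ 2 < x⁻¹ := by
    calc a ^ 2 < exp (-(log x / 2)) ^ 2 := pow_lt_pow_left₀ ha_lt ha two_ne_zero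
      _ = x⁻¹ := by
        rw [← exp_nat_mul, show ((2 : ℕ) : ℝ) * -(log x / 2) = -log x by push_cast; ring,
          exp_neg, exp_log hx_pos]
  have hlt_one : x * a ^ 2 < 1 := by
    calc x * a ^ 2 < x * x⁻¹ := mul_lt_mul_of_pos_left hsq_lt hx_pos
      _ = 1 := mul_inv_cancel₀ hx_pos.ne'
  linarith

theorem stmt17_general (n : ℕ) (hn : 4 < n) (N : ℝ)
    (hN : N = 1 / (2 * (n:ℝ)^2) * ((n:ℝ)/2 - 1) * ((n:ℝ)/2 - 2)) :
    ∃ α₀ : ℝ, 0 < α₀ ∧ ∀ α : ℝ, α₀ ≤ α → ∀ a ∈ Set.Ioo (0:ℝ) 1,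
      1 - 2 * a = Real.tanh (N * α * a^2) →
      a < Real.sqrt (Real.log (4 * N * α) / (4 * N * α)) := by
  have hn' : (4 : ℝ) < n := by exact_mod_cast hn
  have hN_pos : 0 < N := by
    rw [hN]
    exact mul_pos (mul_pos (by positivity) (by linarith)) (by linarith)
  refine ⟨exp 1 / (4 * N), by positivity, fun α hα a _ h => ?_⟩
  rw [div_le_iff₀ (by positivity)] at hα
  rw [mul_assoc 4 N α]
  exact lt_sqrt_log_div_of_one_sub_two_mul_eq_tanh (by linarith) h

/-- with `N = (1/(2n²))(n/2 - 1)(n/2 - 2)`, there exists `α₀ > 0` such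
that for all `α ≥ α₀`, the unique solution `a₂ ∈ (0,1)` of `1 - 2a = tanh(Nαa²)`
satisfies `a₂ < √(log(4Nα)/(4Nα))`. -/
theorem stmt17 (n : ℕ) (hn : 4 < n) (hne : Even n) (N : ℝ)
    (hN : N = 1 / (2 * (n:ℝ)^2) * ((n:ℝ)/2 - 1) * ((n:ℝ)/2 - 2)) :
    ∃ α₀ : ℝ, 0 < α₀ ∧ ∀ α : ℝ, α₀ ≤ α → ∀ a ∈ Set.Ioo (0:ℝ) 1,
      1 - 2 * a = Real.tanh (N * α * a^2) →
      a < Real.sqrt (Real.log (4 * N * α) / (4 * N * α)) :=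
  stmt17_general n hn N hN

end
end

section
/- Let n > 4 be an even integer and let c > (n−2)/n. For α > 0 let a₁ = a₁(α) ∈ (0,1) be the unique solution of 1 − 2a = tanh( (α/(2n²)) (n/2 − 1) ( (n/2)(a + 1)² − 2a² ) ). Then there exists α₀ > 0 such that a₁ > e^{−cα} for all α ≥ α₀. -/
open MeasureTheory ProbabilityTheory Real Set

noncomputable section

/-!
Writing `t` for the argument of `tanh`, the equation says `a = (1 + e^{2t})⁻¹`. For `a ∈ [0, 1]`
the quadratic factor `(n/2)(a+1)² - 2a²` is at most `2n`, so `2t ≤ ((n-2)/n) α`, whence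
`a ≥ e^{-((n-2)/n) α} / 2`; this exceeds `e^{-cα}` once `(c - (n-2)/n) α > log 2`.
-/

namespace Real

theorem one_sub_tanh_div_two (t : ℝ) : (1 - tanh t) / 2 = (1 + exp (2 * t))⁻¹ := by
  have h : exp (2 * t) = exp t * exp t := by rw [two_mul, exp_add]
  rw [tanh_eq_sinh_div_cosh, sinh_eq, cosh_eq, exp_neg, h]
  have := exp_pos t
  field_simp
  ring

theorem exp_neg_mul_lt_inv_one_add_exp {t δ c α : ℝ} (hδ : 0 ≤ δ) (hδc : δ < c)
    (hα : log 2 / (c - δ) < α) (ht : 2 * t ≤ δ * α) :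
    exp (-c * α) < (1 + exp (2 * t))⁻¹ := by
  have hcδ : 0 < c - δ := sub_pos.2 hδc
  have hlog : log 2 < (c - δ) * α := (div_lt_iff₀' hcδ).1 hα
  have hα₀ : 0 ≤ α := (div_pos (log_pos one_lt_two) hcδ |>.trans hα).le
  have hbound : 1 + exp (2 * t) ≤ exp (log 2 + δ * α) := by
    have h₁ : 1 ≤ exp (δ * α) := one_le_exp (mul_nonneg hδ hα₀)
    have h₂ : exp (2 * t) ≤ exp (δ * α) := exp_le_exp.2 ht
    rw [exp_add, exp_log two_pos]
    linarith
  calc exp (-c * α) < exp (-(log 2 + δ * α)) := exp_lt_exp.2 (by linarith)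
    _ = (exp (log 2 + δ * α))⁻¹ := exp_neg _
    _ ≤ (1 + exp (2 * t))⁻¹ := inv_anti₀ (by positivity) hbound

end Real

theorem two_mul_triangle_exponent_le {n : ℕ} (hn : 2 ≤ n) {α a : ℝ} (hα : 0 ≤ α)
    (ha₀ : 0 ≤ a) (ha₁ : a ≤ 1) :
    2 * (α / (2 * (n:ℝ)^2) * ((n:ℝ)/2 - 1) * ((n:ℝ)/2 * (a + 1)^2 - 2 * a^2))
      ≤ ((n:ℝ) - 2) / n * α := by
  have hn' : (2:ℝ) ≤ n := by exact_mod_cast hn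
  have hsq : (a + 1)^2 ≤ 4 := by nlinarith
  have hquad : (n:ℝ)/2 * (a + 1)^2 - 2 * a^2 ≤ 2 * n := by
    nlinarith [mul_le_mul_of_nonneg_left hsq (by positivity : (0:ℝ) ≤ n / 2)]
  calc 2 * (α / (2 * (n:ℝ)^2) * ((n:ℝ)/2 - 1) * ((n:ℝ)/2 * (a + 1)^2 - 2 * a^2))
      ≤ 2 * (α / (2 * (n:ℝ)^2) * ((n:ℝ)/2 - 1) * (2 * n)) := by
        gcongr
        exact mul_nonneg (by positivity) (by linarith)
    _ = ((n:ℝ) - 2) / n * α := by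
        field_simp

theorem stmt18_general (n : ℕ) (hn : 4 < n) (c : ℝ)
    (hc : ((n:ℝ) - 2) / n < c) :
    ∃ α₀ : ℝ, 0 < α₀ ∧ ∀ α : ℝ, α₀ ≤ α → ∀ a ∈ Set.Ioo (0:ℝ) 1,
      1 - 2 * a = Real.tanh (α / (2 * (n:ℝ)^2) * ((n:ℝ)/2 - 1) *
        ((n:ℝ)/2 * (a + 1)^2 - 2 * a^2)) →
      Real.exp (-c * α) < a := by
  set δ : ℝ := ((n:ℝ) - 2) / n
  have hδ : 0 ≤ δ := div_nonneg (by norm_num; omega) (Nat.cast_nonneg n)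
  have hα₀ : 0 < log 2 / (c - δ) + 1 := by
    have := div_pos (log_pos one_lt_two) (sub_pos.2 hc)
    linarith
  refine ⟨log 2 / (c - δ) + 1, hα₀, fun α hα a ⟨ha₀, ha₁⟩ heq => ?_⟩
  have hα' : log 2 / (c - δ) < α := by linarith
  have key := exp_neg_mul_lt_inv_one_add_exp hδ hc hα'
    (two_mul_triangle_exponent_le (by omega) (by linarith) ha₀.le ha₁.le)
  rwa [← one_sub_tanh_div_two, ← heq, sub_sub_cancel, mul_div_cancel_left₀ a two_ne_zero] at key

/-- for `c > (n-2)/n` there exists `α₀ > 0` such that for all `α ≥ α₀`,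
the unique solution `a₁ ∈ (0,1)` of
`1 - 2a = tanh((α/(2n²))(n/2 - 1)((n/2)(a+1)² - 2a²))` satisfies `a₁ > e^{-cα}`. -/
theorem stmt18 (n : ℕ) (hn : 4 < n) (hne : Even n) (c : ℝ)
    (hc : ((n:ℝ) - 2) / n < c) :
    ∃ α₀ : ℝ, 0 < α₀ ∧ ∀ α : ℝ, α₀ ≤ α → ∀ a ∈ Set.Ioo (0:ℝ) 1,
      1 - 2 * a = Real.tanh (α / (2 * (n:ℝ)^2) * ((n:ℝ)/2 - 1) *
        ((n:ℝ)/2 * (a + 1)^2 - 2 * a^2)) →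
      Real.exp (-c * α) < a :=
  stmt18_general n hn c hc

end
end
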